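/- arXiv:0902.0354 — 9 statements merged into one kernel-verified Lean document; each statement's English description precedes it below -/
import Mathlib

section
/- Fix integers n ≥ m ≥ 1 and a constant c > 0, and define P_out(γ₀) = 1 − ∏_{i=1}^m (1 − F_{n−m+i}(c/γ₀)) for γ₀ > 0. Then lim_{γ₀ → ∞} P_out(γ₀) / F_{n−m+1}(c/γ₀) = 1; i.e., at high SNR the system outage probability is dominated by the outage probability of the first stream. -/
/-!
With `F_k` written `erlangCDF k`: near `0`, `F_k(x) = e^{-x} (e^x - Σ_{l<k} x^l/l!) ~ x^k/k!`,
since the Taylor remainder of `exp` of order `k + 1` is `O(x^{k+1})`. Hence `F_{b+i} = o(F_b)`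
for `i ≥ 1`, and from `1 - ∏ (1 - a_i) = a_0 + (1 - a_0)(1 - ∏_{i ≥ 1} (1 - a_i))` with bounded
factors the system outage is `F_b + o(F_b)`. Finally `c/γ₀ → 0` as `γ₀ → ∞`, and `F_b(c/γ₀) > 0`
eventually.
-/

open Filter Asymptotics Finset Real Topology
open scoped Nat

noncomputable def erlangCDF (k : ℕ) (x : ℝ) : ℝ :=
  1 - exp (-x) * ∑ l ∈ range k, x ^ l / l !

lemma erlangCDF_eq_exp_neg_mul (k : ℕ) (x : ℝ) :
    erlangCDF k x = exp (-x) * (exp x - ∑ l ∈ range k, x ^ l / l !) := by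
  rw [erlangCDF, mul_sub, ← exp_add, neg_add_cancel, exp_zero]

lemma continuous_erlangCDF (k : ℕ) : Continuous (erlangCDF k) := by
  unfold erlangCDF; fun_prop

lemma exp_sub_sum_range_isEquivalent_pow_div_factorial (k : ℕ) :
    (fun x => exp x - ∑ l ∈ range k, x ^ l / l !) ~[𝓝 0] fun x => x ^ k / k ! := by
  have hrem : (fun x => exp x - ∑ l ∈ range (k + 1), x ^ l / l !) =o[𝓝 0]
      fun x => x ^ k / k ! := by
    simpa only [inv_mul_eq_div] using
      (exp_sub_sum_range_succ_isLittleO_pow k).const_mul_right (c := (k ! : ℝ)⁻¹) (by positivity)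
  refine (hrem.add_isEquivalent IsEquivalent.refl).congr_left (.of_eq ?_)
  funext x
  simp only [Pi.add_apply, sum_range_succ]
  ring

lemma isEquivalent_erlangCDF (k : ℕ) : erlangCDF k ~[𝓝 0] fun x => x ^ k / k ! := by
  have hexp : (fun x => exp (-x)) ~[𝓝 0] fun _ => (1 : ℝ) :=
    (isEquivalent_const_iff_tendsto one_ne_zero).2 <|
      (by fun_prop : Continuous fun x : ℝ => exp (-x)).tendsto' 0 1 (by simp)
  refine ((hexp.mul (exp_sub_sum_range_isEquivalent_pow_div_factorial k)).congr_left
    (.of_eq ?_)).congr_right (.of_eq ?_)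
  · funext x; simp only [Pi.mul_apply, erlangCDF_eq_exp_neg_mul]
  · funext x; simp only [Pi.mul_apply, one_mul]

lemma isLittleO_erlangCDF_of_lt {j k : ℕ} (hkj : k < j) :
    erlangCDF j =o[𝓝 0] erlangCDF k := by
  have hpow : (fun x : ℝ => x ^ j / j !) =o[𝓝 0] fun x => x ^ k / k ! := by
    simpa only [inv_mul_eq_div] using
      ((isLittleO_pow_pow hkj).const_mul_left (j ! : ℝ)⁻¹).const_mul_right
        (c := (k ! : ℝ)⁻¹) (by positivity)
  exact ((isEquivalent_erlangCDF j).trans_isLittleO hpow).trans_isEquivalent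
    (isEquivalent_erlangCDF k).symm

section

variable {α : Type*} {l : Filter α}

lemma one_sub_prod_one_sub_isLittleO {ι : Type*} (s : Finset ι) {a : ι → α → ℝ} {g : α → ℝ}
    (ho : ∀ i ∈ s, a i =o[l] g) (hb : ∀ i ∈ s, a i =O[l] fun _ => (1 : ℝ)) :
    (fun x => 1 - ∏ i ∈ s, (1 - a i x)) =o[l] g := by
  classical
  induction s using Finset.induction_on with
  | empty => simp
  | insert j s hj ih =>
    simp only [forall_mem_insert] at ho hb
    have hj_bdd : (fun x => 1 - a j x) =O[l] fun _ => (1 : ℝ) := (isBigO_refl _ l).sub hb.1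
    have hrest := (hj_bdd.mul_isLittleO (ih ho.2 hb.2)).congr_right (fun x => one_mul (g x))
    refine (ho.1.add hrest).congr_left fun x => ?_
    rw [prod_insert hj]
    ring

lemma one_sub_prod_range_succ_isEquivalent (m : ℕ) {a : ℕ → α → ℝ}
    (ho : ∀ i < m, a (i + 1) =o[l] a 0) (hb : ∀ i ≤ m, a i =O[l] fun _ => (1 : ℝ)) :
    (fun x => 1 - ∏ i ∈ range (m + 1), (1 - a i x)) ~[l] a 0 := by
  have h0_bdd : (fun x => 1 - a 0 x) =O[l] fun _ => (1 : ℝ) :=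
    (isBigO_refl _ l).sub (hb 0 m.zero_le)
  have htail := one_sub_prod_one_sub_isLittleO (range m) (a := fun i => a (i + 1)) (g := a 0)
    (fun i hi => ho i (mem_range.1 hi)) (fun i hi => hb (i + 1) (mem_range.1 hi))
  have hrest := (h0_bdd.mul_isLittleO htail).congr_right (fun x => one_mul (a 0 x))
  refine (IsEquivalent.refl.add_isLittleO hrest).congr_left (.of_eq ?_)
  funext x
  simp only [Pi.add_apply, prod_range_succ']
  ring

end

theorem system_outage_dominated_by_first_stream_general
    (n m : ℕ) (hm : 1 ≤ m) (c : ℝ) (hc : 0 < c)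
    (F : ℕ → ℝ → ℝ)
    (hF : ∀ k x, F k x = 1 - Real.exp (-x) * ∑ l ∈ Finset.range k, x ^ l / l.factorial)
    (Pout : ℝ → ℝ)
    (hPout : ∀ γ₀, Pout γ₀ = 1 - ∏ i ∈ Finset.range m, (1 - F (n - m + (i + 1)) (c / γ₀))) :
    Tendsto (fun γ₀ => Pout γ₀ / F (n - m + 1) (c / γ₀)) atTop (nhds 1) := by
  obtain rfl : F = erlangCDF := funext₂ hF
  obtain ⟨m, rfl⟩ := Nat.exists_eq_add_of_le' hm
  set b := n - (m + 1) + 1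
  have hP : Pout = fun γ₀ => 1 - ∏ i ∈ range (m + 1), (1 - erlangCDF (b + i) (c / γ₀)) := by
    funext γ₀
    simp only [hPout, b, add_assoc, add_comm 1]
  have hx : Tendsto (fun γ₀ => c / γ₀) atTop (𝓝 0) := tendsto_const_nhds.div_atTop tendsto_id
  have hpos : ∀ᶠ γ₀ in atTop, 0 < erlangCDF b (c / γ₀) :=
    ((isEquivalent_erlangCDF b).comp_tendsto hx).eventually_pos <| by
      filter_upwards [eventually_gt_atTop 0] with γ₀ hγ₀
      exact div_pos (pow_pos (div_pos hc hγ₀) b) (by positivity)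
  have hequiv := one_sub_prod_range_succ_isEquivalent m
    (a := fun i => erlangCDF (b + i)) (l := 𝓝 0)
    (fun i _ => isLittleO_erlangCDF_of_lt (by omega))
    (fun i _ => ((continuous_erlangCDF _).tendsto 0).isBigO_one ℝ)
  subst hP
  exact (isEquivalent_iff_tendsto_one (hpos.mono fun _ => ne_of_gt)).1 (hequiv.comp_tendsto hx)

/-- At high SNR the system outage probability of coded V-BLAST with uniform power
allocation and fixed per-stream rate is dominated by the outage probability of the
first stream: `P_out(γ₀) / F_{n−m+1}(c/γ₀) → 1` as `γ₀ → ∞`. -/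
theorem system_outage_dominated_by_first_stream
    (n m : ℕ) (hm : 1 ≤ m) (hmn : m ≤ n) (c : ℝ) (hc : 0 < c)
    (F : ℕ → ℝ → ℝ)
    (hF : ∀ k x, F k x = 1 - Real.exp (-x) * ∑ l ∈ Finset.range k, x ^ l / l.factorial)
    (Pout : ℝ → ℝ)
    (hPout : ∀ γ₀, Pout γ₀ = 1 - ∏ i ∈ Finset.range m, (1 - F (n - m + (i + 1)) (c / γ₀))) :
    Tendsto (fun γ₀ => Pout γ₀ / F (n - m + 1) (c / γ₀)) atTop (nhds 1) :=
  system_outage_dominated_by_first_stream_general n m hm c hc F hF Pout hPout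
end

section
/- Fix integers n ≥ m ≥ 1 and a constant c > 0, and define P_out(γ₀) = 1 − ∏_{i=1}^m (1 − F_{n−m+i}(c/γ₀)) for γ₀ > 0. Then lim_{γ₀ → ∞} ( − ln P_out(γ₀) / ln γ₀ ) = n − m + 1; i.e., the diversity gain of coded V-BLAST with uniform (or any fixed average) power allocation and fixed per-stream rate equals n − m + 1, the same as the unoptimized system. -/
/-!
Near `0` the Gamma CDF behaves like its first nonvanishing Taylor term, `F_k(x) ~ x ^ k / k!`.
In `1 - ∏ (1 - F_{k+i}(x))` every stream but the first is `o(x ^ k)`, so with `k = n - m + 1`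
and `x = c / γ₀` the outage probability is `P_out(γ₀) ~ c ^ k / (k! γ₀ ^ k)`, whose
log-log slope is `-k`.
-/

open Filter Finset Real Topology
open scoped Nat

noncomputable def gammaCDF (k : ℕ) (x : ℝ) : ℝ :=
  1 - exp (-x) * ∑ l ∈ range k, x ^ l / l !

lemma tendsto_exp_sub_sum_range_div_pow (j : ℕ) :
    Tendsto (fun x : ℝ => (exp x - ∑ l ∈ range j, x ^ l / l !) / x ^ j)
      (𝓝[≠] 0) (𝓝 (1 / j !)) := by
  set C : ℝ := (j + 2) / ((j + 1)! * (j + 1))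
  -- the next Taylor term accounts for the limit, the remainder is `O(x)` by `Real.exp_bound`
  have h_rem : Tendsto (fun x : ℝ => (exp x - ∑ l ∈ range (j + 1), x ^ l / l !) / x ^ j)
      (𝓝[≠] 0) (𝓝 0) := by
    have h_lin : Tendsto (fun x : ℝ => C * |x|) (𝓝[≠] 0) (𝓝 0) :=
      ((by fun_prop : Continuous fun x : ℝ => C * |x|).tendsto' 0 0 (by simp)).mono_left
        nhdsWithin_le_nhds
    refine squeeze_zero_norm' ?_ h_lin
    filter_upwards [self_mem_nhdsWithin, inter_mem_nhdsWithin _ (Icc_mem_nhds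
      (by norm_num : (-1 : ℝ) < 0) (by norm_num : (0 : ℝ) < 1))] with x hx0 hx1
    have hx : |x| ≤ 1 := abs_le.2 hx1.2
    have hxj : 0 < |x| ^ j := pow_pos (abs_pos.2 hx0) j
    rw [norm_div, norm_pow, Real.norm_eq_abs, Real.norm_eq_abs, div_le_iff₀ hxj]
    calc |exp x - ∑ l ∈ range (j + 1), x ^ l / l !|
        ≤ |x| ^ (j + 1) * ((j + 1).succ / ((j + 1)! * (j + 1 : ℕ))) := Real.exp_bound hx j.succ_pos
      _ = C * |x| * |x| ^ j := by simp only [C]; push_cast; ring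
  refine ((add_zero (1 / (j ! : ℝ))) ▸ h_rem.const_add (1 / (j ! : ℝ))).congr' ?_
  filter_upwards [self_mem_nhdsWithin] with x (hx : x ≠ 0)
  rw [sum_range_succ]
  field_simp
  ring

lemma tendsto_gammaCDF_div_pow (j : ℕ) :
    Tendsto (fun x => gammaCDF j x / x ^ j) (𝓝[≠] 0) (𝓝 (1 / j !)) := by
  have h_exp : Tendsto (fun x : ℝ => exp (-x)) (𝓝[≠] 0) (𝓝 1) := by
    simpa using ((by fun_prop : Continuous fun x : ℝ => exp (-x)).tendsto 0).mono_left
      nhdsWithin_le_nhds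
  refine ((one_mul (1 / (j ! : ℝ))) ▸ h_exp.mul (tendsto_exp_sub_sum_range_div_pow j)).congr
    fun x => by rw [gammaCDF, ← mul_div_assoc, mul_sub, ← exp_add, neg_add_cancel, exp_zero]

lemma tendsto_gammaCDF_nhds_zero {k : ℕ} (hk : k ≠ 0) : Tendsto (gammaCDF k) (𝓝 0) (𝓝 0) := by
  have h_cont : Continuous (gammaCDF k) := by unfold gammaCDF; fun_prop
  obtain ⟨k, rfl⟩ := Nat.exists_eq_succ_of_ne_zero hk
  simpa [gammaCDF, sum_range_succ'] using h_cont.tendsto 0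

lemma tendsto_one_sub_prod_one_sub_div {α : Type*} {l : Filter α} {a : ℕ → α → ℝ} {g : α → ℝ}
    {L : ℝ} {m : ℕ} (hm : m ≠ 0) (h_first : Tendsto (fun x => a 0 x / g x) l (𝓝 L))
    (h_rest : ∀ i ≠ 0, Tendsto (fun x => a i x / g x) l (𝓝 0))
    (h_small : ∀ i, Tendsto (a i) l (𝓝 0)) :
    Tendsto (fun x => (1 - ∏ i ∈ range m, (1 - a i x)) / g x) l (𝓝 L) := by
  induction m with
  | zero => exact absurd rfl hm
  | succ m ih =>
    rcases eq_or_ne m 0 with rfl | hm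
    · simpa using h_first
    have h_prod : Tendsto (fun x => ∏ i ∈ range m, (1 - a i x)) l (𝓝 1) := by
      simpa using tendsto_finsetProd (range m) fun i _ => (h_small i).const_sub 1
    have := (ih hm).add ((h_rest m hm).mul h_prod)
    rw [zero_mul, add_zero] at this
    refine this.congr fun x => ?_
    rw [prod_range_succ]
    ring

lemma tendsto_one_sub_prod_one_sub_gammaCDF_div_pow {k m : ℕ} (hk : k ≠ 0) (hm : m ≠ 0) :
    Tendsto (fun x => (1 - ∏ i ∈ range m, (1 - gammaCDF (k + i) x)) / x ^ k)
      (𝓝[≠] 0) (𝓝 (1 / k !)) := by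
  refine tendsto_one_sub_prod_one_sub_div hm (by simpa using tendsto_gammaCDF_div_pow k)
    (fun i hi => ?_) (fun i => (tendsto_gammaCDF_nhds_zero (by omega)).mono_left
      nhdsWithin_le_nhds)
  have h_pow : Tendsto (fun x : ℝ => x ^ i) (𝓝[≠] 0) (𝓝 0) :=
    ((continuous_pow i).tendsto' 0 0 (zero_pow hi)).mono_left nhdsWithin_le_nhds
  have := (tendsto_gammaCDF_div_pow (k + i)).mul h_pow
  rw [mul_zero] at this
  refine this.congr' ?_
  filter_upwards [self_mem_nhdsWithin] with x (hx : x ≠ 0)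
  field_simp
  ring

lemma tendsto_neg_log_div_log_of_tendsto_mul_rpow {f : ℝ → ℝ} {d L : ℝ} (hL : 0 < L)
    (hf : Tendsto (fun x => f x * x ^ d) atTop (𝓝 L)) :
    Tendsto (fun x => -log (f x) / log x) atTop (𝓝 d) := by
  have h_log : Tendsto (fun x => d - log (f x * x ^ d) * (log x)⁻¹) atTop (𝓝 (d - log L * 0)) :=
    tendsto_const_nhds.sub ((hf.log hL.ne').mul tendsto_log_atTop.inv_tendsto_atTop)
  rw [mul_zero, sub_zero] at h_log
  refine h_log.congr' ?_
  filter_upwards [hf.eventually (eventually_gt_nhds hL), eventually_gt_atTop 1]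
    with x hfx hx
  have hx0 : 0 < x := by linarith
  have hfx0 : 0 < f x := pos_of_mul_pos_left hfx (rpow_nonneg hx0.le d)
  have hlog : log x ≠ 0 := (log_pos hx).ne'
  rw [log_mul hfx0.ne' (rpow_pos_of_pos hx0 d).ne', log_rpow hx0]
  field_simp
  ring

/-- The diversity gain of coded V-BLAST with uniform (fixed average) power allocation
and fixed per-stream rate equals `n − m + 1`, the same as the unoptimized system. -/
theorem coded_vblast_fixed_rate_diversity
    (n m : ℕ) (hm : 1 ≤ m) (hmn : m ≤ n) (c : ℝ) (hc : 0 < c)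
    (F : ℕ → ℝ → ℝ)
    (hF : ∀ k x, F k x = 1 - Real.exp (-x) * ∑ l ∈ Finset.range k, x ^ l / l.factorial)
    (Pout : ℝ → ℝ)
    (hPout : ∀ γ₀, Pout γ₀ = 1 - ∏ i ∈ Finset.range m, (1 - F (n - m + (i + 1)) (c / γ₀))) :
    Tendsto (fun γ₀ : ℝ => -Real.log (Pout γ₀) / Real.log γ₀)
      atTop (nhds ((n : ℝ) - m + 1)) := by
  set k := n - m + 1
  have hk : ((k : ℕ) : ℝ) = n - m + 1 := by push_cast [k, Nat.cast_sub hmn]; ring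
  have hPout_eq : ∀ γ₀, Pout γ₀ = 1 - ∏ i ∈ range m, (1 - gammaCDF (k + i) (c / γ₀)) := fun γ₀ ↦ by
    rw [hPout]
    refine congrArg _ (prod_congr rfl fun i _ => ?_)
    rw [hF, gammaCDF, show n - m + (i + 1) = k + i by omega]
  have h_arg : Tendsto (fun γ₀ : ℝ => c / γ₀) atTop (𝓝[≠] 0) :=
    tendsto_nhdsWithin_iff.2 ⟨tendsto_const_nhds.div_atTop tendsto_id,
      eventually_ne_atTop 0 |>.mono fun γ₀ hγ₀ => div_ne_zero hc.ne' hγ₀⟩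
  have h_lim := ((tendsto_one_sub_prod_one_sub_gammaCDF_div_pow (by omega : k ≠ 0)
    (by omega : m ≠ 0)).comp h_arg).mul_const (c ^ k)
  rw [← hk]
  refine tendsto_neg_log_div_log_of_tendsto_mul_rpow (by positivity) (h_lim.congr' ?_)
  filter_upwards [eventually_ne_atTop 0] with γ₀ hγ₀
  rw [Function.comp_apply, ← hPout_eq, rpow_natCast, div_pow]
  field_simp
end

section
/- Fix integers n ≥ m ≥ 1 and R > 0. Let g₁, …, g_m be independent random variables on a probability space with g_i distributed as Gamma with shape n − m + i and rate 1, and for γ₀ > 0 set C_i(γ₀) = ln(1 + γ₀ g_i) and P_out^{ORA}(γ₀) = Pr{ Σ_{i=1}^m C_i(γ₀) < mR }. Then lim_{γ₀ → ∞} ( − ln P_out^{ORA}(γ₀) / ln γ₀ ) = Σ_{i=1}^m (n − m + i) = m(n − (m−1)/2); i.e., the diversity gain of the instantaneous optimum rate allocation is m(n − (m−1)/2), which strictly exceeds the unoptimized diversity n − m + 1 when m ≥ 2. -/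
/-!
On the outage event every term `ln (1 + γ₀ gᵢ)` is nonnegative and below `mR`, so every gain is
below `(e^{mR} - 1)/γ₀`; conversely, if every gain lies in `[0, (e^R - 1)/γ₀)` the system is in
outage. A Gamma variable of shape `a` satisfies `e^{-1} t^a/Γ(a+1) ≤ Pr{g < t} ≤ t^a/Γ(a+1)` for
`t ≤ 1`, so by independence the outage probability is squeezed between two constant multiples of
`γ₀^{-Σ aᵢ}`, and the diversity gain is `Σᵢ (n - m + i) = m(n - (m-1)/2)`.
-/

open MeasureTheory ProbabilityTheory Filter Set Real

lemma lintegral_Ico_rpow_sub_one {a t : ℝ} (ha : 0 < a) (ht : 0 ≤ t) :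
    ∫⁻ x in Ico 0 t, ENNReal.ofReal (x ^ (a - 1)) = ENNReal.ofReal (t ^ a / a) := by
  have hint : IntegrableOn (fun x : ℝ => x ^ (a - 1)) (Ioc 0 t) :=
    (intervalIntegrable_iff_integrableOn_Ioc_of_le ht).mp
      (intervalIntegral.intervalIntegrable_rpow' (by linarith))
  rw [setLIntegral_congr Ico_ae_eq_Ioc, ← ofReal_integral_eq_lintegral_ofReal hint
    ((ae_restrict_iff' measurableSet_Ioc).mpr (ae_of_all _ fun x hx => rpow_nonneg hx.1.le _)),
    ← intervalIntegral.integral_of_le ht, integral_rpow (.inl (by linarith))]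
  simp [ha.ne', zero_rpow]

lemma gammaMeasure_ae_nonneg (a r : ℝ) : ∀ᵐ x ∂gammaMeasure a r, 0 ≤ x := by
  simp only [ae_iff, not_le]
  change gammaMeasure a r (Iio 0) = 0
  rw [gammaMeasure, withDensity_apply _ measurableSet_Iio]
  exact lintegral_gammaPDF_of_nonpos le_rfl

lemma gammaMeasure_Ico (a r t : ℝ) :
    gammaMeasure a r (Ico 0 t) =
      ∫⁻ x in Ico 0 t, ENNReal.ofReal (r ^ a / Gamma a * x ^ (a - 1) * exp (-(r * x))) := by
  rw [gammaMeasure, withDensity_apply _ measurableSet_Ico]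
  exact setLIntegral_congr_fun measurableSet_Ico fun x hx => gammaPDF_of_nonneg hx.1

lemma rpow_div_Gamma_mul {a r t : ℝ} (ha : 0 < a) (hr : 0 ≤ r) (ht : 0 ≤ t) :
    r ^ a / Gamma a * (t ^ a / a) = (r * t) ^ a / Gamma (a + 1) := by
  rw [mul_rpow hr ht, Gamma_add_one ha.ne']
  field_simp

lemma gammaMeasure_Ico_le {a r t : ℝ} (ha : 0 < a) (hr : 0 ≤ r) (ht : 0 ≤ t) :
    gammaMeasure a r (Ico 0 t) ≤ ENNReal.ofReal ((r * t) ^ a / Gamma (a + 1)) := by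
  have hc : 0 ≤ r ^ a / Gamma a := div_nonneg (rpow_nonneg hr _) (Gamma_pos_of_pos ha).le
  calc gammaMeasure a r (Ico 0 t)
      ≤ ∫⁻ x in Ico 0 t, ENNReal.ofReal (r ^ a / Gamma a) * ENNReal.ofReal (x ^ (a - 1)) := by
        rw [gammaMeasure_Ico]
        refine setLIntegral_mono (by fun_prop) fun x hx => ?_
        rw [← ENNReal.ofReal_mul (by positivity)]
        exact ENNReal.ofReal_le_ofReal <| mul_le_of_le_one_right (mul_nonneg hc (rpow_nonneg hx.1 _))
          (exp_le_one_iff.mpr (neg_nonpos.mpr (mul_nonneg hr hx.1)))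
    _ = ENNReal.ofReal ((r * t) ^ a / Gamma (a + 1)) := by
        rw [lintegral_const_mul _ (by fun_prop), lintegral_Ico_rpow_sub_one ha ht,
          ← ENNReal.ofReal_mul (by positivity), rpow_div_Gamma_mul ha hr ht]

lemma le_gammaMeasure_Ico {a r t : ℝ} (ha : 0 < a) (hr : 0 ≤ r) (ht : 0 ≤ t) :
    ENNReal.ofReal (exp (-(r * t)) * ((r * t) ^ a / Gamma (a + 1))) ≤
      gammaMeasure a r (Ico 0 t) := by
  have hc : 0 ≤ r ^ a / Gamma a := div_nonneg (rpow_nonneg hr _) (Gamma_pos_of_pos ha).le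
  calc ENNReal.ofReal (exp (-(r * t)) * ((r * t) ^ a / Gamma (a + 1)))
      = ∫⁻ x in Ico 0 t, ENNReal.ofReal (r ^ a / Gamma a * exp (-(r * t))) *
          ENNReal.ofReal (x ^ (a - 1)) := by
        rw [lintegral_const_mul _ (by fun_prop), lintegral_Ico_rpow_sub_one ha ht,
          ← ENNReal.ofReal_mul (by positivity), ← rpow_div_Gamma_mul ha hr ht]
        congr 1
        ring
    _ ≤ gammaMeasure a r (Ico 0 t) := by
        rw [gammaMeasure_Ico]
        refine setLIntegral_mono (by fun_prop) fun x hx => ?_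
        rw [← ENNReal.ofReal_mul (by positivity)]
        refine ENNReal.ofReal_le_ofReal ?_
        rw [mul_right_comm]
        exact mul_le_mul_of_nonneg_left
          (exp_le_exp.mpr (neg_le_neg (mul_le_mul_of_nonneg_left hx.2.le hr)))
          (mul_nonneg hc (rpow_nonneg hx.1 _))

lemma lt_div_of_sum_log_one_add_mul_lt {ι : Type*} [Fintype ι] {x : ι → ℝ} {γ T : ℝ}
    (hx : ∀ i, 0 ≤ x i) (hγ : 0 < γ) (h : ∑ i, log (1 + γ * x i) < T) (i : ι) :
    x i < (exp T - 1) / γ := by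
  have hpos : ∀ j, 1 ≤ 1 + γ * x j := fun j => by nlinarith [hx j]
  have hle : log (1 + γ * x i) ≤ ∑ j, log (1 + γ * x j) :=
    Finset.single_le_sum (fun j _ => log_nonneg (hpos j)) (Finset.mem_univ i)
  have : 1 + γ * x i < exp T :=
    (log_lt_iff_lt_exp (by linarith [hpos i])).mp (hle.trans_lt h)
  rw [lt_div_iff₀ hγ]
  linarith

lemma sum_log_one_add_mul_lt {ι : Type*} [Fintype ι] [Nonempty ι] {x : ι → ℝ} {γ R : ℝ}
    (hγ : 0 < γ) (hx : ∀ i, x i ∈ Ico 0 ((exp R - 1) / γ)) :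
    ∑ i, log (1 + γ * x i) < Fintype.card ι * R := by
  have hterm : ∀ i, log (1 + γ * x i) < R := fun i => by
    have h := (lt_div_iff₀ hγ).mp (hx i).2
    rw [log_lt_iff_lt_exp (by nlinarith [(hx i).1])]
    linarith
  simpa using Finset.sum_lt_sum_of_nonempty Finset.univ_nonempty fun i _ => hterm i

section GammaFamily

variable {Ω ι : Type*} [MeasurableSpace Ω] {μ : Measure Ω} [Fintype ι] {g : ι → Ω → ℝ}
  {a : ι → ℝ}

lemma measure_iInter_preimage_Ico (hg : ∀ i, Measurable (g i)) (hind : iIndepFun g μ)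
    (hlaw : ∀ i, μ.map (g i) = gammaMeasure (a i) 1) (t : ℝ) :
    μ (⋂ i, g i ⁻¹' Ico 0 t) = ∏ i, gammaMeasure (a i) 1 (Ico 0 t) := by
  rw [hind.meas_iInter fun i => ⟨Ico 0 t, measurableSet_Ico, rfl⟩]
  simp_rw [← hlaw, Measure.map_apply (hg _) measurableSet_Ico]

lemma measure_iInter_preimage_Ico_le (hg : ∀ i, Measurable (g i)) (hind : iIndepFun g μ)
    (hlaw : ∀ i, μ.map (g i) = gammaMeasure (a i) 1) (ha : ∀ i, 0 < a i) {t : ℝ} (ht : 0 ≤ t) :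
    μ (⋂ i, g i ⁻¹' Ico 0 t) ≤
      ENNReal.ofReal ((∏ i, (Gamma (a i + 1))⁻¹) * t ^ ∑ i, a i) := by
  calc μ (⋂ i, g i ⁻¹' Ico 0 t)
      ≤ ∏ i, ENNReal.ofReal (t ^ a i / Gamma (a i + 1)) := by
        rw [measure_iInter_preimage_Ico hg hind hlaw]
        exact Finset.prod_le_prod' fun i _ => by
          simpa using gammaMeasure_Ico_le (ha i) zero_le_one ht
    _ = ENNReal.ofReal ((∏ i, (Gamma (a i + 1))⁻¹) * t ^ ∑ i, a i) := by
        rw [← ENNReal.ofReal_prod_of_nonneg fun i _ =>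
            div_nonneg (rpow_nonneg ht _) (Gamma_pos_of_pos (by linarith [ha i])).le,
          rpow_sum_of_nonneg ht fun i _ => (ha i).le, ← Finset.prod_mul_distrib]
        simp_rw [div_eq_inv_mul]

lemma le_measure_iInter_preimage_Ico (hg : ∀ i, Measurable (g i)) (hind : iIndepFun g μ)
    (hlaw : ∀ i, μ.map (g i) = gammaMeasure (a i) 1) (ha : ∀ i, 0 < a i) {t : ℝ} (ht₀ : 0 ≤ t)
    (ht₁ : t ≤ 1) :
    ENNReal.ofReal ((∏ i, exp (-1) / Gamma (a i + 1)) * t ^ ∑ i, a i) ≤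
      μ (⋂ i, g i ⁻¹' Ico 0 t) := by
  calc ENNReal.ofReal ((∏ i, exp (-1) / Gamma (a i + 1)) * t ^ ∑ i, a i)
      = ∏ i, ENNReal.ofReal (exp (-1) * (t ^ a i / Gamma (a i + 1))) := by
        rw [← ENNReal.ofReal_prod_of_nonneg fun i _ => by
            have := Gamma_pos_of_pos (by linarith [ha i] : 0 < a i + 1); positivity,
          rpow_sum_of_nonneg ht₀ fun i _ => (ha i).le, ← Finset.prod_mul_distrib]
        simp_rw [div_mul_eq_mul_div, mul_div_assoc]
    _ ≤ μ (⋂ i, g i ⁻¹' Ico 0 t) := by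
        rw [measure_iInter_preimage_Ico hg hind hlaw]
        refine Finset.prod_le_prod' fun i _ => ?_
        have := Gamma_pos_of_pos (by linarith [ha i] : 0 < a i + 1)
        calc ENNReal.ofReal (exp (-1) * (t ^ a i / Gamma (a i + 1)))
            ≤ ENNReal.ofReal (exp (-t) * (t ^ a i / Gamma (a i + 1))) := by gcongr
          _ ≤ gammaMeasure (a i) 1 (Ico 0 t) := by
            simpa using le_gammaMeasure_Ico (ha i) zero_le_one ht₀

lemma toReal_measure_sum_log_lt_le (hg : ∀ i, Measurable (g i)) (hind : iIndepFun g μ)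
    (hlaw : ∀ i, μ.map (g i) = gammaMeasure (a i) 1) (ha : ∀ i, 0 < a i) {T γ : ℝ}
    (hT : 0 ≤ T) (hγ : 0 < γ) :
    (μ {ω | ∑ i, log (1 + γ * g i ω) < T}).toReal ≤
      (∏ i, (Gamma (a i + 1))⁻¹) * (exp T - 1) ^ (∑ i, a i) / γ ^ (∑ i, a i) := by
  have hA : 0 ≤ exp T - 1 := by linarith [one_le_exp hT]
  have hnonneg : ∀ᵐ ω ∂μ, ∀ i, 0 ≤ g i ω := ae_all_iff.mpr fun i =>
    ae_of_ae_map (hg i).aemeasurable (hlaw i ▸ gammaMeasure_ae_nonneg _ _)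
  have hsub : {ω | ∑ i, log (1 + γ * g i ω) < T} ≤ᵐ[μ] ⋂ i, g i ⁻¹' Ico 0 ((exp T - 1) / γ) := by
    filter_upwards [hnonneg] with ω hω hS
    exact mem_iInter.mpr fun i => ⟨hω i, lt_div_of_sum_log_one_add_mul_lt hω hγ hS i⟩
  have hC : 0 ≤ ∏ i, (Gamma (a i + 1))⁻¹ := Finset.prod_nonneg fun i _ =>
    inv_nonneg.mpr (Gamma_pos_of_pos (by linarith [ha i])).le
  rw [mul_div_assoc, ← div_rpow hA hγ.le]
  exact ENNReal.toReal_le_of_le_ofReal (by positivity) ((measure_mono_ae hsub).trans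
    (measure_iInter_preimage_Ico_le hg hind hlaw ha (div_nonneg hA hγ.le)))

lemma le_toReal_measure_sum_log_lt [IsFiniteMeasure μ] [Nonempty ι] (hg : ∀ i, Measurable (g i))
    (hind : iIndepFun g μ) (hlaw : ∀ i, μ.map (g i) = gammaMeasure (a i) 1) (ha : ∀ i, 0 < a i)
    {R T γ : ℝ} (hR : 0 ≤ R) (hT : Fintype.card ι * R ≤ T) (hγ₀ : 0 < γ) (hγ : exp R - 1 ≤ γ) :
    (∏ i, exp (-1) / Gamma (a i + 1)) * (exp R - 1) ^ (∑ i, a i) / γ ^ (∑ i, a i) ≤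
      (μ {ω | ∑ i, log (1 + γ * g i ω) < T}).toReal := by
  have hB : 0 ≤ exp R - 1 := by linarith [one_le_exp hR]
  have hsub : ⋂ i, g i ⁻¹' Ico 0 ((exp R - 1) / γ) ⊆
      {ω | ∑ i, log (1 + γ * g i ω) < T} := fun ω hω =>
    (sum_log_one_add_mul_lt (x := fun i => g i ω) hγ₀ (mem_iInter.mp hω)).trans_le hT
  have hc : 0 ≤ ∏ i, exp (-1) / Gamma (a i + 1) := Finset.prod_nonneg fun i _ =>
    div_nonneg (exp_pos _).le (Gamma_pos_of_pos (by linarith [ha i])).le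
  rw [mul_div_assoc, ← div_rpow hB hγ₀.le]
  refine (ENNReal.toReal_ofReal (by positivity)).symm.trans_le <|
    ENNReal.toReal_mono (measure_ne_top _ _) ((le_measure_iInter_preimage_Ico hg hind hlaw ha
    (div_nonneg hB hγ₀.le) ((div_le_one hγ₀).mpr hγ)).trans (measure_mono hsub))

end GammaFamily

lemma sum_fin_add_add_one (b : ℝ) (m : ℕ) : ∑ i : Fin m, (b + i + 1) = m * (b + (m + 1) / 2) := by
  induction m with
  | zero => simp
  | succ m ih =>
    rw [Fin.sum_univ_castSucc]
    simp only [Fin.val_castSucc, Fin.val_last, ih]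
    push_cast
    ring

lemma tendsto_neg_log_div_log_of_rpow_bounds {P : ℝ → ℝ} {c₁ c₂ d : ℝ}
    (hlower : ∀ᶠ γ in atTop, c₁ / γ ^ d ≤ P γ) (hupper : ∀ᶠ γ in atTop, P γ ≤ c₂ / γ ^ d)
    (hc₁ : 0 < c₁) :
    Tendsto (fun γ => -log (P γ) / log γ) atTop (nhds d) := by
  have hlim : ∀ c : ℝ, Tendsto (fun γ => d - log c / log γ) atTop (nhds d) := fun c => by
    simpa using tendsto_const_nhds.sub (tendsto_const_nhds.div_atTop tendsto_log_atTop)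
  have hbounds : ∀ᶠ γ in atTop, d - log c₂ / log γ ≤ -log (P γ) / log γ ∧
      -log (P γ) / log γ ≤ d - log c₁ / log γ := by
    filter_upwards [hlower, hupper, eventually_gt_atTop 1] with γ hl hu hγ
    have hγd : 0 < γ ^ d := rpow_pos_of_pos (by linarith) d
    have hP : 0 < P γ := (div_pos hc₁ hγd).trans_le hl
    have hc₂ : 0 < c₂ := (div_pos_iff_of_pos_right hγd).mp (hP.trans_le hu)
    have hlog : ∀ c, 0 < c → log (c / γ ^ d) = log c - d * log γ := fun c hc => by
      rw [log_div hc.ne' hγd.ne', log_rpow (by linarith)]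
    have hu' := log_le_log hP hu
    have hl' := log_le_log (div_pos hc₁ hγd) hl
    rw [hlog c₂ hc₂] at hu'
    rw [hlog c₁ hc₁] at hl'
    have hlogγ : 0 < log γ := log_pos hγ
    have hform : ∀ c, d - log c / log γ = -(log c - d * log γ) / log γ := fun c => by
      field_simp
      ring
    rw [hform, hform]
    constructor <;> gcongr
  exact tendsto_of_tendsto_of_tendsto_of_le_of_le' (hlim c₂) (hlim c₁)
    (hbounds.mono fun _ h => h.1) (hbounds.mono fun _ h => h.2)

/-- Diversity gain of the instantaneous optimum rate allocation (ORA) in coded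
V-BLAST: with independent Gamma-distributed effective gains `gᵢ` of shapes `n−m+i`,
the outage probability `Pr{Σᵢ ln(1+γ₀ gᵢ) < mR}` has diversity gain
`Σᵢ (n−m+i) = m(n−(m−1)/2)`, strictly larger than the unoptimized `n−m+1` when `m ≥ 2`. -/
theorem ora_diversity_gain
    {Ω : Type*} [MeasurableSpace Ω] (μ : Measure Ω) [IsProbabilityMeasure μ]
    (n m : ℕ) (hm : 1 ≤ m) (hmn : m ≤ n) (R : ℝ) (hR : 0 < R)
    (g : Fin m → Ω → ℝ) (hg : ∀ i, Measurable (g i))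
    (hind : iIndepFun g μ)
    (hlaw : ∀ i : Fin m, Measure.map (g i) μ = gammaMeasure (n - m + (i : ℕ) + 1) 1) :
    Tendsto
      (fun γ₀ : ℝ =>
        -Real.log ((μ {ω | ∑ i, Real.log (1 + γ₀ * g i ω) < m * R}).toReal) /
          Real.log γ₀)
      atTop (nhds ((m : ℝ) * ((n : ℝ) - ((m : ℝ) - 1) / 2))) ∧
    (2 ≤ m → (n : ℝ) - m + 1 < (m : ℝ) * ((n : ℝ) - ((m : ℝ) - 1) / 2)) := by
  have hmn' : (m : ℝ) ≤ n := by exact_mod_cast hmn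
  have ha : ∀ i : Fin m, 0 < (n : ℝ) - m + i + 1 := fun i => by
    linarith [(i : ℕ).cast_nonneg (α := ℝ)]
  have hB : 0 < exp R - 1 := by linarith [add_one_lt_exp hR.ne']
  have : Nonempty (Fin m) := ⟨⟨0, hm⟩⟩
  constructor
  · rw [← show ∑ i : Fin m, ((n : ℝ) - m + i + 1) = m * (n - (m - 1) / 2) by
      rw [sum_fin_add_add_one]; ring]
    exact tendsto_neg_log_div_log_of_rpow_bounds
      ((eventually_ge_atTop (max (exp R - 1) 1)).mono fun γ hγ =>
        le_toReal_measure_sum_log_lt hg hind hlaw ha hR.le (by simp)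
          (one_pos.trans_le (le_of_max_le_right hγ)) (le_of_max_le_left hγ))
      ((eventually_gt_atTop 0).mono fun γ hγ =>
        toReal_measure_sum_log_lt_le hg hind hlaw ha (by positivity) hγ)
      (mul_pos (Finset.prod_pos fun i _ =>
        div_pos (exp_pos _) (Gamma_pos_of_pos (by linarith [ha i]))) (rpow_pos_of_pos hB _))
  · intro h2
    have h2' : (2 : ℝ) ≤ m := by exact_mod_cast h2
    nlinarith [mul_pos (by linarith : (0 : ℝ) < m - 1) (by linarith : (0 : ℝ) < n - m / 2 + 1)]
end

section
/- Let m ≥ 1, let g₁, …, g_m > 0 be channel gains, γ₀ > 0 the SNR and P > 0 the total power. Suppose λ > 0 and the allocation α*_i = max(1/λ − 1/(γ₀ g_i), 0) satisfies Σ_{i=1}^m α*_i = P. Then α* maximizes the sum capacity: for every α ∈ ℝ^m with α_i ≥ 0 and Σ_{i=1}^m α_i = P, one has Σ_{i=1}^m ln(1 + α_i γ₀ g_i) ≤ Σ_{i=1}^m ln(1 + α*_i γ₀ g_i). -/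
/-!
The sum capacity is concave, so it lies below its tangent plane at `α*`. The waterfilling
condition says that the marginal capacity `γ₀ gᵢ / (1 + α*ᵢ γ₀ gᵢ)` of every stream equals the
water level `λ` where `α*ᵢ > 0` and is at most `λ` where `α*ᵢ = 0`. Hence the tangent plane at `α*`
is bounded by `C(α*) + λ Σ (αᵢ - α*ᵢ)`, and the last sum vanishes since both allocations have
total power `P`.
-/

open Finset

theorem Real.log_le_log_add_sub_div {a b : ℝ} (ha : 0 < a) (hb : 0 < b) :
    Real.log b ≤ Real.log a + (b - a) / a := by
  have h := Real.log_le_sub_one_of_pos (div_pos hb ha)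
  rw [Real.log_div hb.ne' ha.ne', div_sub_one ha.ne'] at h
  linarith

theorem Finset.sum_le_sum_of_le_add_mul_sub {ι : Type*} {s : Finset ι} {f g x y : ι → ℝ}
    {lam : ℝ} (h : ∀ i ∈ s, f i ≤ g i + lam * (x i - y i))
    (hxy : ∑ i ∈ s, x i = ∑ i ∈ s, y i) :
    ∑ i ∈ s, f i ≤ ∑ i ∈ s, g i :=
  calc ∑ i ∈ s, f i ≤ ∑ i ∈ s, (g i + lam * (x i - y i)) := sum_le_sum h
    _ = ∑ i ∈ s, g i := by rw [sum_add_distrib, ← mul_sum, sum_sub_distrib, hxy]; ring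

/-- Waterfilling power of a stream with effective gain `c = γ₀ gᵢ` at water level `lam`. -/
noncomputable def waterfill (lam c : ℝ) : ℝ := max (1 / lam - 1 / c) 0

section Waterfill

variable {lam c : ℝ}

theorem waterfill_nonneg : 0 ≤ waterfill lam c := le_max_right _ _

theorem div_one_add_waterfill_mul_eq (hc : 0 < c)
    (hwet : 0 < waterfill lam c) : c / (1 + waterfill lam c * c) = lam := by
  rw [waterfill, max_eq_left (lt_max_iff.mp hwet |>.resolve_right (lt_irrefl 0)).le, sub_mul,
    one_div_mul_cancel hc.ne', add_sub_cancel, one_div_mul_eq_div, div_div_cancel₀ hc.ne']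

theorem div_one_add_waterfill_mul_le (hlam : 0 < lam) (hc : 0 < c) :
    c / (1 + waterfill lam c * c) ≤ lam := by
  rcases le_or_gt (1 / lam - 1 / c) 0 with hdry | hwet
  · rw [waterfill, max_eq_right hdry, zero_mul, add_zero, div_one]
    rwa [sub_nonpos, one_div_le_one_div hlam hc] at hdry
  · exact (div_one_add_waterfill_mul_eq hc (lt_max_of_lt_left hwet)).le

theorem log_one_add_mul_le_waterfill (hlam : 0 < lam) (hc : 0 < c) {a : ℝ} (ha : 0 ≤ a) :
    Real.log (1 + a * c) ≤
      Real.log (1 + waterfill lam c * c) + lam * (a - waterfill lam c) := by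
  set s := waterfill lam c
  have hs : 0 ≤ s := waterfill_nonneg
  have tangent := Real.log_le_log_add_sub_div (a := 1 + s * c) (b := 1 + a * c)
    (by positivity) (by positivity)
  have marginal : (1 + a * c - (1 + s * c)) / (1 + s * c) ≤ lam * (a - s) := by
    rw [show 1 + a * c - (1 + s * c) = (a - s) * c by ring, mul_div_assoc, mul_comm lam]
    rcases hs.eq_or_lt with hdry | hwet
    · exact mul_le_mul_of_nonneg_left (div_one_add_waterfill_mul_le hlam hc)
        (by rwa [← hdry, sub_zero])
    · rw [div_one_add_waterfill_mul_eq hc hwet]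
  linarith

end Waterfill

theorem waterfilling_maximizes_sum_capacity_general
    (m : ℕ) (g : Fin m → ℝ) (hg : ∀ i, 0 < g i)
    (γ₀ P lam : ℝ) (hγ₀ : 0 < γ₀) (hlam : 0 < lam)
    (αstar : Fin m → ℝ)
    (hαstar : ∀ i, αstar i = max (1 / lam - 1 / (γ₀ * g i)) 0)
    (hsum : ∑ i, αstar i = P) :
    ∀ α : Fin m → ℝ, (∀ i, 0 ≤ α i) → ∑ i, α i = P →
      ∑ i, Real.log (1 + α i * γ₀ * g i) ≤ ∑ i, Real.log (1 + αstar i * γ₀ * g i) := by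
  intro α hα hαsum
  obtain rfl : αstar = fun i ↦ waterfill lam (γ₀ * g i) := funext hαstar
  simp only [mul_assoc]
  exact sum_le_sum_of_le_add_mul_sub
    (fun i _ ↦ log_one_add_mul_le_waterfill hlam (mul_pos hγ₀ (hg i)) (hα i))
    (hαsum.trans hsum.symm)

/-- Optimality of the waterfilling power allocation: if `α*ᵢ = (1/λ − 1/(γ₀ gᵢ))₊`
meets the total power constraint `Σ α*ᵢ = P`, then it maximizes the sum capacity
`Σ ln(1 + αᵢ γ₀ gᵢ)` over all nonnegative allocations with total power `P`. -/
theorem waterfilling_maximizes_sum_capacity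
    (m : ℕ) (hm : 1 ≤ m) (g : Fin m → ℝ) (hg : ∀ i, 0 < g i)
    (γ₀ P lam : ℝ) (hγ₀ : 0 < γ₀) (hP : 0 < P) (hlam : 0 < lam)
    (αstar : Fin m → ℝ)
    (hαstar : ∀ i, αstar i = max (1 / lam - 1 / (γ₀ * g i)) 0)
    (hsum : ∑ i, αstar i = P) :
    ∀ α : Fin m → ℝ, (∀ i, 0 ≤ α i) → ∑ i, α i = P →
      ∑ i, Real.log (1 + α i * γ₀ * g i) ≤ ∑ i, Real.log (1 + αstar i * γ₀ * g i) :=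
  waterfilling_maximizes_sum_capacity_general m g hg γ₀ P lam hγ₀ hlam αstar hαstar hsum
end

section
/- Let k > k′ ≥ 1 be integers, m > 0, and let g₁, …, g_k > 0 and g′₁, …, g′_{k′} > 0 be two sets of channel gains. For γ₀ > 0 define C(γ₀) = Σ_{i=1}^k ln(1 + α_i(γ₀) γ₀ g_i) with α_i(γ₀) = 1/λ(γ₀) − 1/(γ₀ g_i) and 1/λ(γ₀) = (1/k)(m + (1/γ₀) Σ_{i=1}^k 1/g_i), and define C′(γ₀) analogously from g′ and k′. Then lim_{γ₀ → ∞} ( C(γ₀) − C′(γ₀) ) = +∞; i.e., at high SNR the waterfilled capacity with more active streams exceeds that with fewer streams, so keeping all streams active is eventually optimal. -/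
open Filter Topology

/-!
Each argument `1 + α_i γ₀ g_i` of the logarithms equals `γ₀ g_i (m + γ₀⁻¹ Σ_j 1/g_j) / k`, so
the capacity with `k` streams is `k log γ₀` plus a term converging to `Σ_i log (g_i m / k)`. The
difference of two capacities is therefore `(k - k') log γ₀` plus a convergent term, which tends
to `+∞` for `k' < k`.
-/

noncomputable def waterfillingCapacity {n : ℕ} (m : ℝ) (g : Fin n → ℝ) (γ₀ : ℝ) : ℝ :=
  ∑ i, Real.log (1 + ((1 / (n : ℝ)) * (m + (1 / γ₀) * ∑ j, 1 / g j) - 1 / (γ₀ * g i)) * γ₀ * g i)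

lemma one_add_waterfilling_mul_eq (c m S γ₀ x : ℝ) (hγ₀ : γ₀ ≠ 0) (hx : x ≠ 0) :
    1 + (c * (m + (1 / γ₀) * S) - 1 / (γ₀ * x)) * γ₀ * x = γ₀ * (x * c * (m + S / γ₀)) := by
  field_simp
  ring

section

variable {n : ℕ} {m : ℝ} {g : Fin n → ℝ}

lemma waterfillingCapacity_eq_log_add (hm : 0 < m) (hg : ∀ i, 0 < g i) {γ₀ : ℝ} (hγ₀ : 0 < γ₀) :
    waterfillingCapacity m g γ₀
      = n * Real.log γ₀ + ∑ i, Real.log (g i * (1 / (n : ℝ)) * (m + (∑ j, 1 / g j) / γ₀)) := by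
  have hS : 0 ≤ ∑ j, 1 / g j := Finset.sum_nonneg fun j _ => (one_div_pos.mpr (hg j)).le
  have hfactor : ∀ i, 0 < g i * (1 / (n : ℝ)) * (m + (∑ j, 1 / g j) / γ₀) := fun i => by
    have hn : (0 : ℝ) < n := Nat.cast_pos.mpr i.pos
    exact mul_pos (mul_pos (hg i) (one_div_pos.mpr hn)) (add_pos_of_pos_of_nonneg hm (by positivity))
  simp only [waterfillingCapacity,
    one_add_waterfilling_mul_eq _ _ _ _ _ hγ₀.ne' (hg _).ne',
    Real.log_mul hγ₀.ne' (hfactor _).ne', Finset.sum_add_distrib, Finset.sum_const,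
    Finset.card_univ, Fintype.card_fin, nsmul_eq_mul]

lemma tendsto_waterfillingCapacity_sub_log (hm : 0 < m) (hg : ∀ i, 0 < g i) :
    Tendsto (fun γ₀ => waterfillingCapacity m g γ₀ - n * Real.log γ₀) atTop
      (𝓝 (∑ i, Real.log (g i * (1 / (n : ℝ)) * m))) := by
  have hrest : Tendsto (fun γ₀ => ∑ i, Real.log (g i * (1 / (n : ℝ)) * (m + (∑ j, 1 / g j) / γ₀)))
      atTop (𝓝 (∑ i, Real.log (g i * (1 / (n : ℝ)) * m))) := by
    refine tendsto_finsetSum _ fun i _ => ?_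
    have hn : (0 : ℝ) < n := Nat.cast_pos.mpr i.pos
    have hlim : Tendsto (fun γ₀ => m + (∑ j, 1 / g j) / γ₀) atTop (𝓝 m) := by
      simpa using tendsto_const_nhds.add (tendsto_const_nhds.div_atTop (tendsto_id (α := ℝ)))
    exact (tendsto_const_nhds.mul hlim).log (mul_pos (mul_pos (hg i) (one_div_pos.mpr hn)) hm).ne'
  refine hrest.congr' ?_
  filter_upwards [eventually_gt_atTop 0] with γ₀ hγ₀
  rw [waterfillingCapacity_eq_log_add hm hg hγ₀, add_sub_cancel_left]

end

theorem more_streams_better_at_high_snr_general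
    (k k' : ℕ) (hkk' : k' < k) (m : ℝ) (hm : 0 < m)
    (g : Fin k → ℝ) (hg : ∀ i, 0 < g i)
    (g' : Fin k' → ℝ) (hg' : ∀ i, 0 < g' i)
    (C C' : ℝ → ℝ)
    (hC : ∀ γ₀, C γ₀ = ∑ i, Real.log
      (1 + ((1 / (k : ℝ)) * (m + (1 / γ₀) * ∑ j, 1 / g j) - 1 / (γ₀ * g i)) * γ₀ * g i))
    (hC' : ∀ γ₀, C' γ₀ = ∑ i, Real.log
      (1 + ((1 / (k' : ℝ)) * (m + (1 / γ₀) * ∑ j, 1 / g' j) - 1 / (γ₀ * g' i)) * γ₀ * g' i)) :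
    Tendsto (fun γ₀ => C γ₀ - C' γ₀) atTop atTop := by
  obtain rfl : C = waterfillingCapacity m g := funext hC
  obtain rfl : C' = waterfillingCapacity m g' := funext hC'
  have hgrowth : Tendsto (fun γ₀ => ((k : ℝ) - k') * Real.log γ₀) atTop atTop :=
    Real.tendsto_log_atTop.const_mul_atTop (sub_pos.mpr (Nat.cast_lt.mpr hkk'))
  refine (hgrowth.atTop_add ((tendsto_waterfillingCapacity_sub_log hm hg).sub
    (tendsto_waterfillingCapacity_sub_log hm hg'))).congr fun γ₀ => ?_
  ring

/-- At high SNR, the interior waterfilling capacity with more active streams exceeds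
that with fewer streams: the difference tends to `+∞`, so keeping all streams active
is eventually optimal. -/
theorem more_streams_better_at_high_snr
    (k k' : ℕ) (hk' : 1 ≤ k') (hkk' : k' < k) (m : ℝ) (hm : 0 < m)
    (g : Fin k → ℝ) (hg : ∀ i, 0 < g i)
    (g' : Fin k' → ℝ) (hg' : ∀ i, 0 < g' i)
    (C C' : ℝ → ℝ)
    (hC : ∀ γ₀, C γ₀ = ∑ i, Real.log
      (1 + ((1 / (k : ℝ)) * (m + (1 / γ₀) * ∑ j, 1 / g j) - 1 / (γ₀ * g i)) * γ₀ * g i))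
    (hC' : ∀ γ₀, C' γ₀ = ∑ i, Real.log
      (1 + ((1 / (k' : ℝ)) * (m + (1 / γ₀) * ∑ j, 1 / g' j) - 1 / (γ₀ * g' i)) * γ₀ * g' i)) :
    Tendsto (fun γ₀ => C γ₀ - C' γ₀) atTop atTop :=
  more_streams_better_at_high_snr_general k k' hkk' m hm g hg g' hg' C C' hC hC'
end

section
/- Let m ≥ 1, R > 0, and let g₁, …, g_m be nonnegative random variables on a probability space. For γ > 0 define P_out^{ORA}(γ) = Pr{ Σ_{i=1}^m ln(1 + γ g_i) < mR } and P_out^{OPRA}(γ₀) = Pr{ sup_{α ∈ S} Σ_{i=1}^m ln(1 + α_i γ₀ g_i) < mR }, where S = { α ∈ ℝ^m : α_i ≥ 0, Σ α_i = m }. Then for every γ₀ > 0, P_out^{ORA}(m γ₀) ≤ P_out^{OPRA}(γ₀) ≤ P_out^{ORA}(γ₀); i.e., the SNR gain of the joint optimum power/rate allocation over rate-only allocation is between 1 and m. -/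
/-!
Power allocation only reshapes the per-stream SNRs: every admissible `α` satisfies
`0 ≤ αᵢ ≤ m`, so by monotonicity of `log` the OPRA capacity is at most the ORA capacity at
SNR `m γ₀`, while the uniform allocation `α = 1` shows it is at least the ORA capacity at `γ₀`.
Smaller capacity means a larger outage event, and outage probabilities are compared by
monotonicity of the measure.
-/

open Finset Real

abbrev powerSimplex (ι : Type*) [Fintype ι] (P : ℝ) : Type _ :=
  {α : ι → ℝ // (∀ i, 0 ≤ α i) ∧ ∑ i, α i = P}

section PowerAllocation

variable {ι : Type*} [Fintype ι] {P γ : ℝ} {x : ι → ℝ}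

theorem powerSimplex.apply_le (α : powerSimplex ι P) (i : ι) : α.1 i ≤ P :=
  (single_le_sum (fun j _ => α.2.1 j) (mem_univ i)).trans_eq α.2.2

theorem sum_log_one_add_le_of_mem_powerSimplex (hγ : 0 ≤ γ) (hx : ∀ i, 0 ≤ x i)
    (α : powerSimplex ι P) :
    ∑ i, log (1 + α.1 i * γ * x i) ≤ ∑ i, log (1 + P * γ * x i) := by
  refine sum_le_sum fun i _ => log_le_log (by have := α.2.1 i; have := hx i; positivity) ?_
  gcongr
  · exact hx i
  · exact α.apply_le i

theorem bddAbove_range_sum_log_one_add (hγ : 0 ≤ γ) (hx : ∀ i, 0 ≤ x i) :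
    BddAbove (Set.range fun α : powerSimplex ι P => ∑ i, log (1 + α.1 i * γ * x i)) :=
  ⟨_, Set.forall_mem_range.2 (sum_log_one_add_le_of_mem_powerSimplex hγ hx)⟩

theorem ciSup_sum_log_one_add_le [Nonempty (powerSimplex ι P)] (hγ : 0 ≤ γ)
    (hx : ∀ i, 0 ≤ x i) :
    ⨆ α : powerSimplex ι P, ∑ i, log (1 + α.1 i * γ * x i) ≤ ∑ i, log (1 + P * γ * x i) :=
  ciSup_le (sum_log_one_add_le_of_mem_powerSimplex hγ hx)

end PowerAllocation

section UniformAllocation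

variable {m : ℕ}

def powerSimplex.uniform (m : ℕ) : powerSimplex (Fin m) m :=
  ⟨fun _ => 1, fun _ => zero_le_one, by simp⟩

instance : Nonempty (powerSimplex (Fin m) m) := ⟨powerSimplex.uniform m⟩

theorem sum_log_one_add_le_ciSup {γ : ℝ} {x : Fin m → ℝ} (hγ : 0 ≤ γ) (hx : ∀ i, 0 ≤ x i) :
    ∑ i, log (1 + γ * x i) ≤
      ⨆ α : powerSimplex (Fin m) m, ∑ i, log (1 + α.1 i * γ * x i) := by
  simpa [powerSimplex.uniform] using
    le_ciSup (bddAbove_range_sum_log_one_add hγ hx) (powerSimplex.uniform m)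

end UniformAllocation

open MeasureTheory
open scoped ENNReal

theorem opra_snr_gain_bounds_general
    {Ω : Type*} [MeasurableSpace Ω] (μ : Measure Ω)
    (m : ℕ) (R : ℝ)
    (g : Fin m → Ω → ℝ) (hnonneg : ∀ i ω, 0 ≤ g i ω)
    (PoutORA : ℝ → ℝ≥0∞)
    (hORA : ∀ γ, PoutORA γ = μ {ω | ∑ i, Real.log (1 + γ * g i ω) < m * R})
    (PoutOPRA : ℝ → ℝ≥0∞)
    (hOPRA : ∀ γ₀, PoutOPRA γ₀ =
      μ {ω | (⨆ α : {α : Fin m → ℝ // (∀ i, 0 ≤ α i) ∧ ∑ i, α i = m},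
        ∑ i, Real.log (1 + (α : Fin m → ℝ) i * γ₀ * g i ω)) < m * R}) :
    ∀ γ₀ : ℝ, 0 < γ₀ →
      PoutORA (m * γ₀) ≤ PoutOPRA γ₀ ∧ PoutOPRA γ₀ ≤ PoutORA γ₀ := by
  intro γ₀ hγ₀
  rw [hORA, hOPRA, hORA]
  constructor
  · exact measure_mono fun ω (hω : _ < _) =>
      (ciSup_sum_log_one_add_le hγ₀.le (hnonneg · ω)).trans_lt hω
  · exact measure_mono fun ω (hω : _ < _) =>
      (sum_log_one_add_le_ciSup hγ₀.le (hnonneg · ω)).trans_lt hω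

/-- The SNR gain of the joint optimum power/rate allocation (OPRA) over the optimum
rate allocation (ORA) with uniform power is between 1 and `m`:
`P_out^{ORA}(m γ₀) ≤ P_out^{OPRA}(γ₀) ≤ P_out^{ORA}(γ₀)`. -/
theorem opra_snr_gain_bounds
    {Ω : Type*} [MeasurableSpace Ω] (μ : Measure Ω) [IsProbabilityMeasure μ]
    (m : ℕ) (hm : 1 ≤ m) (R : ℝ) (hR : 0 < R)
    (g : Fin m → Ω → ℝ) (hg : ∀ i, Measurable (g i)) (hnonneg : ∀ i ω, 0 ≤ g i ω)
    (PoutORA : ℝ → ℝ≥0∞)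
    (hORA : ∀ γ, PoutORA γ = μ {ω | ∑ i, Real.log (1 + γ * g i ω) < m * R})
    (PoutOPRA : ℝ → ℝ≥0∞)
    (hOPRA : ∀ γ₀, PoutOPRA γ₀ =
      μ {ω | (⨆ α : {α : Fin m → ℝ // (∀ i, 0 ≤ α i) ∧ ∑ i, α i = m},
        ∑ i, Real.log (1 + (α : Fin m → ℝ) i * γ₀ * g i ω)) < m * R}) :
    ∀ γ₀ : ℝ, 0 < γ₀ →
      PoutORA (m * γ₀) ≤ PoutOPRA γ₀ ∧ PoutOPRA γ₀ ≤ PoutORA γ₀ :=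
  opra_snr_gain_bounds_general μ m R g hnonneg PoutORA hORA PoutOPRA hOPRA
end

section
/- Fix integers n ≥ m ≥ 1, R > 0, and set c = e^R − 1. For a power allocation α with α_i > 0 and Σ_{i=1}^m α_i = m, define P(α, γ₀) = 1 − ∏_{i=1}^m (1 − F_{n−m+i}( c/(α_i γ₀) )). Then for every such α and every γ₀ > 0, P(u, m γ₀) ≤ P(α, γ₀) ≤ P(α, γ₀) and in particular P(u, m γ₀) ≤ inf_α P(α, γ₀) ≤ P(u, γ₀), where u = (1, …, 1) is the uniform allocation; i.e., the SNR gain of the optimum average power allocation (with fixed per-stream rate) is between 1 and m. -/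
/-!
With `Q k x = e^{-x} ∑_{l ≤ k} x^l / l!` the survival function of the Erlang law of shape `k + 1`,
the success probability of stream `i` is `Q (n - m + i) (c / (α i γ₀))`. Since `α i ≤ ∑ α = m`,
every stream sees at least the threshold `c / (m γ₀)` of the uniform allocation at SNR `m γ₀`,
and `Q` is antitone on `[0, ∞)` (its derivative is `-e^{-x} x^k / k!`), so every factor of the
product shrinks. The uniform allocation is admissible, which bounds the infimum from above.
-/

open Finset

noncomputable def erlangSurvival (k : ℕ) (x : ℝ) : ℝ :=
  Real.exp (-x) * ∑ l ∈ range (k + 1), x ^ l / l.factorial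

lemma hasDerivAt_sum_pow_div_factorial (k : ℕ) (x : ℝ) :
    HasDerivAt (fun y : ℝ => ∑ l ∈ range (k + 1), y ^ l / l.factorial)
      (∑ l ∈ range k, x ^ l / l.factorial) x := by
  have h : HasDerivAt (fun y : ℝ => ∑ l ∈ range (k + 1), y ^ l / l.factorial)
      (∑ l ∈ range (k + 1), (l : ℝ) * x ^ (l - 1) / l.factorial) x :=
    HasDerivAt.fun_sum fun l _ => by
      simpa [mul_comm] using (hasDerivAt_pow l x).div_const (l.factorial : ℝ)
  convert h using 1
  rw [sum_range_succ']
  simp only [Nat.cast_zero, zero_mul, zero_div, add_zero]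
  refine sum_congr rfl fun i _ => ?_
  rw [Nat.factorial_succ]
  push_cast
  field_simp

namespace erlangSurvival

lemma hasDerivAt (k : ℕ) (x : ℝ) :
    HasDerivAt (erlangSurvival k) (-(Real.exp (-x) * (x ^ k / k.factorial))) x := by
  have hexp : HasDerivAt (fun y : ℝ => Real.exp (-y)) (-Real.exp (-x)) x := by
    simpa using (hasDerivAt_neg x).exp
  refine (hexp.fun_mul (hasDerivAt_sum_pow_div_factorial k x)).congr_deriv ?_
  rw [sum_range_succ]
  ring

lemma antitoneOn (k : ℕ) : AntitoneOn (erlangSurvival k) (Set.Ici 0) := by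
  refine antitoneOn_of_hasDerivWithinAt_nonpos (convex_Ici 0)
    (fun x _ => (hasDerivAt k x).continuousAt.continuousWithinAt)
    (fun x _ => (hasDerivAt k x).hasDerivWithinAt) fun x hx => ?_
  have hx : 0 < x := by simpa using hx
  have : 0 ≤ Real.exp (-x) * (x ^ k / k.factorial) := by positivity
  linarith

lemma nonneg (k : ℕ) {x : ℝ} (hx : 0 ≤ x) : 0 ≤ erlangSurvival k x :=
  mul_nonneg (Real.exp_pos _).le (sum_nonneg fun l _ => by positivity)

lemma le_one (k : ℕ) {x : ℝ} (hx : 0 ≤ x) : erlangSurvival k x ≤ 1 :=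
  calc erlangSurvival k x ≤ Real.exp (-x) * Real.exp x :=
        mul_le_mul_of_nonneg_left (Real.sum_le_exp_of_nonneg hx (k + 1)) (Real.exp_pos _).le
    _ = 1 := by rw [← Real.exp_add, neg_add_cancel, Real.exp_zero]

end erlangSurvival

section Outage

variable {ι : Type*} [Fintype ι] (k : ι → ℕ)

/-- Outage probability of independent streams, stream `i` needing an Erlang(`k i + 1`) gain
above the threshold `x i`. -/
noncomputable def outage (x : ι → ℝ) : ℝ :=
  1 - ∏ i, erlangSurvival (k i) (x i)

lemma outage_nonneg {x : ι → ℝ} (hx : ∀ i, 0 ≤ x i) : 0 ≤ outage k x :=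
  sub_nonneg.2 <| prod_le_one (fun i _ => erlangSurvival.nonneg _ (hx i))
    fun i _ => erlangSurvival.le_one _ (hx i)

lemma outage_mono {x y : ι → ℝ} (hx : ∀ i, 0 ≤ x i) (hxy : ∀ i, x i ≤ y i) :
    outage k x ≤ outage k y :=
  sub_le_sub_left (prod_le_prod (fun i _ => erlangSurvival.nonneg _ ((hx i).trans (hxy i)))
    fun i _ => erlangSurvival.antitoneOn _ (hx i) ((hx i).trans (hxy i)) (hxy i)) _

end Outage

lemma div_sum_mul_le_div_mul {ι : Type*} [Fintype ι] {α : ι → ℝ} (hα : ∀ i, 0 < α i)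
    {c γ : ℝ} (hc : 0 ≤ c) (hγ : 0 < γ) (i : ι) : c / ((∑ j, α j) * γ) ≤ c / (α i * γ) :=
  div_le_div_of_nonneg_left hc (mul_pos (hα i) hγ) <| mul_le_mul_of_nonneg_right
    (single_le_sum (fun j _ => (hα j).le) (mem_univ i)) hγ.le

theorem average_opa_snr_gain_bounds_general
    (n m : ℕ) (R : ℝ) (hR : 0 < R) (c : ℝ)
    (hc : c = Real.exp R - 1)
    (F : ℕ → ℝ → ℝ)
    (hF : ∀ k x, F k x = 1 - Real.exp (-x) * ∑ l ∈ Finset.range k, x ^ l / l.factorial)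
    (P : (Fin m → ℝ) → ℝ → ℝ)
    (hP : ∀ α γ₀, P α γ₀ =
      1 - ∏ i : Fin m, (1 - F (n - m + (i : ℕ) + 1) (c / (α i * γ₀)))) :
    ∀ γ₀ : ℝ, 0 < γ₀ →
      (∀ α : Fin m → ℝ, (∀ i, 0 < α i) → ∑ i, α i = m →
        P (fun _ => 1) (m * γ₀) ≤ P α γ₀) ∧
      (P (fun _ => 1) (m * γ₀) ≤
        ⨅ α : {α : Fin m → ℝ // (∀ i, 0 < α i) ∧ ∑ i, α i = m}, P (α : Fin m → ℝ) γ₀) ∧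
      ((⨅ α : {α : Fin m → ℝ // (∀ i, 0 < α i) ∧ ∑ i, α i = m}, P (α : Fin m → ℝ) γ₀) ≤
        P (fun _ => 1) γ₀) := by
  intro γ₀ hγ₀
  have hc0 : 0 ≤ c := by rw [hc, sub_nonneg]; exact Real.one_le_exp hR.le
  have hP' : ∀ α γ, P α γ = outage (fun i : Fin m => n - m + (i : ℕ)) (fun i => c / (α i * γ)) := by
    intro α γ
    simp only [hP, hF, outage, erlangSurvival, sub_sub_cancel]
  have key : ∀ α : Fin m → ℝ, (∀ i, 0 < α i) → ∑ i, α i = m →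
      P (fun _ => 1) (m * γ₀) ≤ P α γ₀ := by
    intro α hα hsum
    rw [hP', hP']
    refine outage_mono _ (fun i => by positivity) fun i => ?_
    simpa [hsum, one_mul] using div_sum_mul_le_div_mul hα hc0 hγ₀ i
  let u : {α : Fin m → ℝ // (∀ i, 0 < α i) ∧ ∑ i, α i = m} := ⟨fun _ => 1, fun _ => one_pos, by simp⟩
  have hbdd : BddBelow (Set.range fun α : {α : Fin m → ℝ // (∀ i, 0 < α i) ∧ ∑ i, α i = m} =>
      P α γ₀) := by
    refine ⟨0, ?_⟩
    rintro _ ⟨⟨α, hα, -⟩, rfl⟩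
    show 0 ≤ P α γ₀
    rw [hP']
    exact outage_nonneg _ fun i => div_nonneg hc0 (mul_pos (hα i) hγ₀).le
  have : Nonempty {α : Fin m → ℝ // (∀ i, 0 < α i) ∧ ∑ i, α i = m} := ⟨u⟩
  exact ⟨key, le_ciInf fun ⟨α, hα, hsum⟩ => key α hα hsum, ciInf_le hbdd u⟩

/-- The SNR gain of the optimum average power allocation (with fixed per-stream rate)
in coded V-BLAST is between 1 and `m`: for any allocation `α` (positive, total power
`m`), `P(u, m γ₀) ≤ P(α, γ₀)`, and hence
`P(u, m γ₀) ≤ inf_α P(α, γ₀) ≤ P(u, γ₀)`, where `u = (1,…,1)`. -/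
theorem average_opa_snr_gain_bounds
    (n m : ℕ) (hm : 1 ≤ m) (hmn : m ≤ n) (R : ℝ) (hR : 0 < R) (c : ℝ)
    (hc : c = Real.exp R - 1)
    (F : ℕ → ℝ → ℝ)
    (hF : ∀ k x, F k x = 1 - Real.exp (-x) * ∑ l ∈ Finset.range k, x ^ l / l.factorial)
    (P : (Fin m → ℝ) → ℝ → ℝ)
    (hP : ∀ α γ₀, P α γ₀ =
      1 - ∏ i : Fin m, (1 - F (n - m + (i : ℕ) + 1) (c / (α i * γ₀)))) :
    ∀ γ₀ : ℝ, 0 < γ₀ →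
      (∀ α : Fin m → ℝ, (∀ i, 0 < α i) → ∑ i, α i = m →
        P (fun _ => 1) (m * γ₀) ≤ P α γ₀) ∧
      (P (fun _ => 1) (m * γ₀) ≤
        ⨅ α : {α : Fin m → ℝ // (∀ i, 0 < α i) ∧ ∑ i, α i = m}, P (α : Fin m → ℝ) γ₀) ∧
      ((⨅ α : {α : Fin m → ℝ // (∀ i, 0 < α i) ∧ ∑ i, α i = m}, P (α : Fin m → ℝ) γ₀) ≤
        P (fun _ => 1) γ₀) :=
  average_opa_snr_gain_bounds_general n m R hR c hc F hF P hP
end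

section
/- Fix integers n ≥ m ≥ 1 and R > 0. Let g₁, …, g_m be independent random variables with g_i distributed as Gamma with shape n − m + i and rate 1, and define P_out^{OPRA}(γ₀) = Pr{ sup_{α ∈ S} Σ_{i=1}^m ln(1 + α_i γ₀ g_i) < mR }, where S = {α ∈ ℝ^m : α_i ≥ 0, Σ α_i = m}. Then lim_{γ₀ → ∞} ( − ln P_out^{OPRA}(γ₀) / ln γ₀ ) = m(n − (m−1)/2); i.e., the joint optimum power/rate allocation has the same diversity gain as the optimum rate allocation alone, so optimum power allocation on top of rate allocation yields no additional diversity. -/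
/-!
Let `C` be the waterfilled sum capacity. Putting all power on stream `i` gives
`log (1 + m γ₀ gᵢ) ≤ C` for every `i`, while `αᵢ ≤ m` gives `C ≤ ∑ᵢ log (1 + m γ₀ gᵢ)`.
So, up to the constants in the thresholds, outage is the event that every `gᵢ` is below a
constant times `1 / γ₀`. Near the origin the Gamma(a, 1) law has `P(g < t) ≍ t ^ a`, hence by
independence this event has probability `≍ γ₀ ^ (-∑ aᵢ)`, and the shapes `aᵢ = n - m + i` add
up to `m (n - (m - 1) / 2)`.
-/

open MeasureTheory ProbabilityTheory Filter Set Real Topology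

def HasDiversityGain (p : ℝ → ℝ) (d : ℝ) : Prop :=
  Tendsto (fun γ => -log (p γ) / log γ) atTop (𝓝 d)

lemma hasDiversityGain_of_bounded {p : ℝ → ℝ} {d L U : ℝ}
    (hL : ∀ᶠ γ in atTop, L ≤ log (p γ) + d * log γ)
    (hU : ∀ᶠ γ in atTop, log (p γ) + d * log γ ≤ U) : HasDiversityGain p d := by
  have hdiv : ∀ C : ℝ, Tendsto (fun γ => C / log γ) atTop (𝓝 0) := fun C =>
    tendsto_const_nhds.div_atTop tendsto_log_atTop
  have herr : Tendsto (fun γ => (log (p γ) + d * log γ) / log γ) atTop (𝓝 0) := by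
    refine tendsto_of_tendsto_of_tendsto_of_le_of_le' (hdiv L) (hdiv U) ?_ ?_
    · filter_upwards [hL, eventually_gt_atTop 1] with γ hγ h1
      exact div_le_div_of_nonneg_right hγ (log_pos h1).le
    · filter_upwards [hU, eventually_gt_atTop 1] with γ hγ h1
      exact div_le_div_of_nonneg_right hγ (log_pos h1).le
  have hlim := (tendsto_const_nhds (x := d)).sub herr
  rw [sub_zero] at hlim
  refine hlim.congr' ?_
  filter_upwards [eventually_gt_atTop 1] with γ h1
  have := (log_pos h1).ne'
  field_simp
  ring

lemma HasDiversityGain.prod {ι : Type*} [Fintype ι] {p : ι → ℝ → ℝ} {d : ι → ℝ}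
    (h : ∀ i, HasDiversityGain (p i) (d i)) (hp : ∀ i, ∀ᶠ γ in atTop, p i γ ≠ 0) :
    HasDiversityGain (fun γ => ∏ i, p i γ) (∑ i, d i) := by
  refine (tendsto_finsetSum Finset.univ fun i _ => h i).congr' ?_
  filter_upwards [eventually_all.2 hp] with γ hγ
  rw [log_prod fun i _ => hγ i, ← Finset.sum_div, ← Finset.sum_neg_distrib]

lemma HasDiversityGain.of_le_of_le {p q r : ℝ → ℝ} {d : ℝ}
    (hq : HasDiversityGain q d) (hr : HasDiversityGain r d) (hq0 : ∀ᶠ γ in atTop, 0 < q γ)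
    (hqp : ∀ᶠ γ in atTop, q γ ≤ p γ) (hpr : ∀ᶠ γ in atTop, p γ ≤ r γ) :
    HasDiversityGain p d := by
  refine tendsto_of_tendsto_of_tendsto_of_le_of_le' hr hq ?_ ?_
  · filter_upwards [hq0, hqp, hpr, eventually_gt_atTop 1] with γ hq0 hqp hpr h1
    exact div_le_div_of_nonneg_right (neg_le_neg (log_le_log (hq0.trans_le hqp) hpr))
      (log_pos h1).le
  · filter_upwards [hq0, hqp, eventually_gt_atTop 1] with γ hq0 hqp h1
    exact div_le_div_of_nonneg_right (neg_le_neg (log_le_log hq0 hqp)) (log_pos h1).le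

lemma setLIntegral_Ioo_ofReal_mul_rpow {a t : ℝ} (k : ℝ) (ha : 0 < a) (ht : 0 ≤ t)
    (hk : 0 ≤ k) :
    ∫⁻ x in Ioo 0 t, ENNReal.ofReal (k * x ^ (a - 1)) = ENNReal.ofReal (k * (t ^ a / a)) := by
  have hint : IntegrableOn (fun x : ℝ => k * x ^ (a - 1)) (Ioo 0 t) :=
    (((intervalIntegral.intervalIntegrable_rpow' (by linarith)).const_mul k).1).mono_set
      Ioo_subset_Ioc_self
  rw [← ofReal_integral_eq_lintegral_ofReal hint]
  · rw [← integral_Ioc_eq_integral_Ioo, ← intervalIntegral.integral_of_le ht,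
      intervalIntegral.integral_const_mul, integral_rpow (Or.inl (by linarith)), sub_add_cancel,
      zero_rpow ha.ne', sub_zero]
  · rw [EventuallyLE, ae_restrict_iff' measurableSet_Ioo]
    exact ae_of_all _ fun x hx => by have := hx.1; positivity

lemma gammaMeasure_Iio_eq_setLIntegral_Ioo {a r t : ℝ} (ht : 0 ≤ t) :
    gammaMeasure a r (Iio t) = ∫⁻ x in Ioo 0 t, gammaPDF a r x := by
  rw [gammaMeasure, withDensity_apply _ measurableSet_Iio, ← Iio_union_Ico_eq_Iio ht,
    lintegral_union measurableSet_Ico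
      ((Iio_disjoint_Ici le_rfl).mono_right Ico_subset_Ici_self),
    lintegral_gammaPDF_of_nonpos le_rfl, zero_add,
    setLIntegral_congr (Ioo_ae_eq_Ico (a := (0 : ℝ)) (b := t)).symm]

lemma gammaPDF_one_eq {a x : ℝ} (hx : 0 ≤ x) :
    gammaPDF a 1 x = ENNReal.ofReal ((Gamma a)⁻¹ * x ^ (a - 1) * exp (-x)) := by
  rw [gammaPDF_of_nonneg hx, one_rpow, one_div, one_mul]

lemma toReal_gammaMeasure_Iio_le {a t : ℝ} (ha : 0 < a) (ht : 0 ≤ t) :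
    (gammaMeasure a 1 (Iio t)).toReal ≤ t ^ a / (a * Gamma a) := by
  have hΓ := Gamma_pos_of_pos ha
  refine ENNReal.toReal_le_of_le_ofReal (by positivity) ?_
  calc gammaMeasure a 1 (Iio t)
      ≤ ∫⁻ x in Ioo 0 t, ENNReal.ofReal ((Gamma a)⁻¹ * x ^ (a - 1)) := by
        rw [gammaMeasure_Iio_eq_setLIntegral_Ioo ht]
        refine setLIntegral_mono (by fun_prop) fun x hx => ?_
        rw [gammaPDF_one_eq hx.1.le]
        have := hx.1
        have : exp (-x) ≤ 1 := exp_le_one_iff.2 (by linarith)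
        refine ENNReal.ofReal_le_ofReal ?_
        exact mul_le_of_le_one_right (by positivity) this
    _ = ENNReal.ofReal (t ^ a / (a * Gamma a)) := by
        rw [setLIntegral_Ioo_ofReal_mul_rpow _ ha ht (by positivity)]
        congr 1
        field_simp

lemma le_toReal_gammaMeasure_Iio {a t : ℝ} (ha : 0 < a) (ht : 0 ≤ t) :
    exp (-t) * (t ^ a / (a * Gamma a)) ≤ (gammaMeasure a 1 (Iio t)).toReal := by
  have hΓ := Gamma_pos_of_pos ha
  have := isProbabilityMeasure_gammaMeasure ha one_pos
  refine (ENNReal.ofReal_le_iff_le_toReal (measure_ne_top _ _)).1 ?_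
  calc ENNReal.ofReal (exp (-t) * (t ^ a / (a * Gamma a)))
      = ∫⁻ x in Ioo 0 t, ENNReal.ofReal (exp (-t) * (Gamma a)⁻¹ * x ^ (a - 1)) := by
        rw [setLIntegral_Ioo_ofReal_mul_rpow _ ha ht (by positivity)]
        congr 1
        field_simp
    _ ≤ gammaMeasure a 1 (Iio t) := by
        rw [gammaMeasure_Iio_eq_setLIntegral_Ioo ht]
        refine setLIntegral_mono (measurable_gammaPDFReal a 1).ennreal_ofReal fun x hx => ?_
        rw [gammaPDF_one_eq hx.1.le]
        have := hx.1
        have : exp (-t) ≤ exp (-x) := exp_le_exp.2 (by linarith [hx.2])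
        refine ENNReal.ofReal_le_ofReal ?_
        calc exp (-t) * (Gamma a)⁻¹ * x ^ (a - 1)
            ≤ exp (-x) * (Gamma a)⁻¹ * x ^ (a - 1) := by gcongr
          _ = (Gamma a)⁻¹ * x ^ (a - 1) * exp (-x) := by ring

lemma toReal_gammaMeasure_Iio_pos {a t : ℝ} (ha : 0 < a) (ht : 0 < t) :
    0 < (gammaMeasure a 1 (Iio t)).toReal :=
  lt_of_lt_of_le (by have := Gamma_pos_of_pos ha; positivity)
    (le_toReal_gammaMeasure_Iio ha ht.le)

lemma hasDiversityGain_gammaMeasure_Iio {a c : ℝ} (ha : 0 < a) (hc : 0 < c) :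
    HasDiversityGain (fun γ => (gammaMeasure a 1 (Iio (c / γ))).toReal) a := by
  have hΓ := Gamma_pos_of_pos ha
  set K := a * log c - log (a * Gamma a)
  have hlog : ∀ γ : ℝ, 1 ≤ γ →
      log ((c / γ) ^ a / (a * Gamma a)) + a * log γ = K := fun γ hγ => by
    rw [log_div (by positivity) (by positivity), log_rpow (by positivity),
      log_div hc.ne' (by positivity)]
    ring
  refine hasDiversityGain_of_bounded (L := K - c) (U := K) ?_ ?_
  · filter_upwards [eventually_ge_atTop 1] with γ hγ
    have ht : c / γ ≤ c := div_le_self hc.le hγ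
    have hlow := log_le_log (by positivity)
      (le_toReal_gammaMeasure_Iio ha (t := c / γ) (by positivity))
    rw [log_mul (exp_pos _).ne' (by positivity), log_exp] at hlow
    linarith [hlog γ hγ]
  · filter_upwards [eventually_ge_atTop 1] with γ hγ
    have hup := log_le_log (toReal_gammaMeasure_Iio_pos ha (by positivity))
      (toReal_gammaMeasure_Iio_le ha (t := c / γ) (by positivity))
    linarith [hlog γ hγ]

section SumCapacity

variable {ι : Type*} [Fintype ι] {P γ : ℝ} {x : ι → ℝ}

noncomputable def sumCapacity (P γ : ℝ) (x : ι → ℝ) : ℝ :=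
  ⨆ α : {α : ι → ℝ // (∀ i, 0 ≤ α i) ∧ ∑ i, α i = P},
    ∑ i, log (1 + (α : ι → ℝ) i * γ * x i)

lemma sum_log_le_of_mem_simplex (hγ : 0 ≤ γ) (hx : ∀ i, 0 ≤ x i)
    (α : {α : ι → ℝ // (∀ i, 0 ≤ α i) ∧ ∑ i, α i = P}) :
    ∑ i, log (1 + (α : ι → ℝ) i * γ * x i) ≤ ∑ i, log (1 + P * γ * x i) := by
  refine Finset.sum_le_sum fun i _ => ?_
  have hαi : (α : ι → ℝ) i ≤ P :=
    (Finset.single_le_sum (fun j _ => α.2.1 j) (Finset.mem_univ i)).trans_eq α.2.2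
  have := mul_nonneg (mul_nonneg (α.2.1 i) hγ) (hx i)
  exact log_le_log (by linarith) (by gcongr; exact hx i)

lemma sumCapacity_le (hP : 0 ≤ P) (hγ : 0 ≤ γ) (hx : ∀ i, 0 ≤ x i) :
    sumCapacity P γ x ≤ ∑ i, log (1 + P * γ * x i) :=
  Real.iSup_le (sum_log_le_of_mem_simplex hγ hx)
    (Finset.sum_nonneg fun i _ =>
      log_nonneg (by have := mul_nonneg (mul_nonneg hP hγ) (hx i); linarith))

lemma log_le_sumCapacity (hP : 0 ≤ P) (hγ : 0 ≤ γ) (hx : ∀ i, 0 ≤ x i) (i : ι) :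
    log (1 + P * γ * x i) ≤ sumCapacity P γ x := by
  classical
  let α : {α : ι → ℝ // (∀ i, 0 ≤ α i) ∧ ∑ i, α i = P} :=
    ⟨Pi.single i P, fun j => by by_cases h : j = i <;> simp [h, hP], by simp⟩
  refine le_ciSup_of_le ⟨_, forall_mem_range.2 (sum_log_le_of_mem_simplex hγ hx)⟩ α ?_
  rw [Fintype.sum_eq_single i fun j hj => by simp [α, hj]]
  simp [α]

lemma sumCapacity_lt_mul_of_forall_lt [Nonempty ι] (hP : 0 < P) (hγ : 0 < γ)
    (hx : ∀ i, 0 ≤ x i) {R : ℝ} (h : ∀ i, x i < (exp R - 1) / P / γ) :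
    sumCapacity P γ x < Fintype.card ι * R := by
  calc sumCapacity P γ x ≤ ∑ i, log (1 + P * γ * x i) := sumCapacity_le hP.le hγ.le hx
    _ < ∑ _i : ι, R := Finset.sum_lt_sum_of_nonempty Finset.univ_nonempty fun i _ => by
        have hi := h i
        rw [lt_div_iff₀ hγ, lt_div_iff₀ hP] at hi
        have := mul_nonneg (mul_nonneg hP.le hγ.le) (hx i)
        rw [log_lt_iff_lt_exp (by linarith)]
        linarith
    _ = Fintype.card ι * R := by simp

lemma lt_of_sumCapacity_lt (hP : 0 < P) (hγ : 0 < γ) (hx : ∀ i, 0 ≤ x i) {r : ℝ}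
    (h : sumCapacity P γ x < r) (i : ι) : x i < (exp r - 1) / P / γ := by
  have hlt := (log_le_sumCapacity hP.le hγ.le hx i).trans_lt h
  have := mul_nonneg (mul_nonneg hP.le hγ.le) (hx i)
  rw [log_lt_iff_lt_exp (by linarith)] at hlt
  rw [lt_div_iff₀ hγ, lt_div_iff₀ hP]
  linarith

end SumCapacity

lemma ae_nonneg_gammaMeasure {a r : ℝ} : ∀ᵐ x ∂gammaMeasure a r, 0 ≤ x := by
  simp only [ae_iff, not_le]
  change gammaMeasure a r (Iio 0) = 0
  rw [gammaMeasure, withDensity_apply _ measurableSet_Iio, lintegral_gammaPDF_of_nonpos le_rfl]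

section IndependentGammaGains

variable {Ω ι : Type*} [MeasurableSpace Ω] {μ : Measure Ω} {g : ι → Ω → ℝ} {a : ι → ℝ}

lemma ProbabilityTheory.iIndepFun.measure_forall_lt [Fintype ι] (hind : iIndepFun g μ)
    (hg : ∀ i, AEMeasurable (g i) μ) (t : ℝ) :
    μ {ω | ∀ i, g i ω < t} = ∏ i, μ.map (g i) (Iio t) := by
  rw [show {ω | ∀ i, g i ω < t} = ⋂ i, g i ⁻¹' Iio t by ext; simp,
    hind.meas_iInter fun i => ⟨Iio t, measurableSet_Iio, rfl⟩]
  exact Finset.prod_congr rfl fun i _ =>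
    (Measure.map_apply_of_aemeasurable (hg i) measurableSet_Iio).symm

lemma aemeasurable_of_map_eq_gammaMeasure (ha : ∀ i, 0 < a i)
    (hlaw : ∀ i, μ.map (g i) = gammaMeasure (a i) 1) (i : ι) : AEMeasurable (g i) μ :=
  .of_map_ne_zero <| by
    rw [hlaw i]; exact (isProbabilityMeasure_gammaMeasure (ha i) one_pos).ne_zero

lemma ae_forall_nonneg_of_map_eq_gammaMeasure [Countable ι] (ha : ∀ i, 0 < a i)
    (hlaw : ∀ i, μ.map (g i) = gammaMeasure (a i) 1) : ∀ᵐ ω ∂μ, ∀ i, 0 ≤ g i ω :=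
  ae_all_iff.2 fun i => ae_of_ae_map (aemeasurable_of_map_eq_gammaMeasure ha hlaw i)
    (by rw [hlaw i]; exact ae_nonneg_gammaMeasure)

lemma toReal_measure_forall_lt [Fintype ι] (ha : ∀ i, 0 < a i)
    (hlaw : ∀ i, μ.map (g i) = gammaMeasure (a i) 1) (hind : iIndepFun g μ) (t : ℝ) :
    (μ {ω | ∀ i, g i ω < t}).toReal = ∏ i, (gammaMeasure (a i) 1 (Iio t)).toReal := by
  simp_rw [hind.measure_forall_lt (aemeasurable_of_map_eq_gammaMeasure ha hlaw),
    ENNReal.toReal_prod, hlaw]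

lemma toReal_measure_forall_lt_pos [Fintype ι] (ha : ∀ i, 0 < a i)
    (hlaw : ∀ i, μ.map (g i) = gammaMeasure (a i) 1) (hind : iIndepFun g μ) {t : ℝ}
    (ht : 0 < t) :
    0 < (μ {ω | ∀ i, g i ω < t}).toReal := by
  rw [toReal_measure_forall_lt ha hlaw hind]
  exact Finset.prod_pos fun i _ => toReal_gammaMeasure_Iio_pos (ha i) ht

lemma hasDiversityGain_measure_forall_lt [Fintype ι] (ha : ∀ i, 0 < a i)
    (hlaw : ∀ i, μ.map (g i) = gammaMeasure (a i) 1) (hind : iIndepFun g μ)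
    {c : ℝ} (hc : 0 < c) :
    HasDiversityGain (fun γ => (μ {ω | ∀ i, g i ω < c / γ}).toReal) (∑ i, a i) := by
  simp_rw [toReal_measure_forall_lt ha hlaw hind]
  exact .prod (fun i => hasDiversityGain_gammaMeasure_Iio (ha i) hc) fun i =>
    (eventually_gt_atTop 0).mono fun γ hγ =>
      (toReal_gammaMeasure_Iio_pos (ha i) (div_pos hc hγ)).ne'

end IndependentGammaGains

lemma sum_fin_add_natCast (m : ℕ) (b : ℝ) :
    ∑ i : Fin m, (b + (i : ℕ)) = m * b + m * (m - 1) / 2 := by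
  induction m with
  | zero => simp
  | succ k ih =>
    rw [Fin.sum_univ_castSucc]
    simp only [Fin.val_castSucc, Fin.val_last, ih]
    push_cast
    ring

theorem opra_diversity_gain_general
    {Ω : Type*} [MeasurableSpace Ω] (μ : Measure Ω) [IsProbabilityMeasure μ]
    (n m : ℕ) (hm : 1 ≤ m) (hmn : m ≤ n) (R : ℝ) (hR : 0 < R)
    (g : Fin m → Ω → ℝ)
    (hind : iIndepFun g μ)
    (hlaw : ∀ i : Fin m, Measure.map (g i) μ = gammaMeasure (n - m + (i : ℕ) + 1) 1) :
    Tendsto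
      (fun γ₀ : ℝ =>
        -Real.log
            ((μ {ω | (⨆ α : {α : Fin m → ℝ // (∀ i, 0 ≤ α i) ∧ ∑ i, α i = m},
                ∑ i, Real.log (1 + (α : Fin m → ℝ) i * γ₀ * g i ω)) < m * R}).toReal) /
          Real.log γ₀)
      atTop (nhds ((m : ℝ) * ((n : ℝ) - ((m : ℝ) - 1) / 2))) := by
  have : Nonempty (Fin m) := Fin.pos_iff_nonempty.1 hm
  have hm0 : (0 : ℝ) < m := by exact_mod_cast hm
  set a : Fin m → ℝ := fun i => n - m + (i : ℕ) + 1
  have ha : ∀ i, 0 < a i := fun i => by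
    have : (m : ℝ) ≤ n := by exact_mod_cast hmn
    linarith [(i : ℕ).cast_nonneg (α := ℝ)]
  have hsum : ∑ i, a i = m * (n - (m - 1) / 2) := by
    simp_rw [a, add_right_comm _ _ (1 : ℝ), sum_fin_add_natCast]
    ring
  have hnonneg := ae_forall_nonneg_of_map_eq_gammaMeasure ha hlaw
  have hc : ∀ {r : ℝ}, 0 < r → 0 < (exp r - 1) / m := fun hr =>
    div_pos (by linarith [add_one_lt_exp hr.ne']) hm0
  have hgain : ∀ {r : ℝ}, 0 < r → HasDiversityGain
      (fun γ => (μ {ω | ∀ i, g i ω < (exp r - 1) / m / γ}).toReal) (m * (n - (m - 1) / 2)) :=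
    fun hr => hsum ▸ hasDiversityGain_measure_forall_lt ha hlaw hind (hc hr)
  change HasDiversityGain (fun γ => (μ {ω | sumCapacity m γ (g · ω) < m * R}).toReal) _
  refine (hgain hR).of_le_of_le (hgain (mul_pos hm0 hR)) ?_ ?_ ?_
  · filter_upwards [eventually_gt_atTop 0] with γ hγ
    exact toReal_measure_forall_lt_pos ha hlaw hind (div_pos (hc hR) hγ)
  · filter_upwards [eventually_gt_atTop 0] with γ hγ
    refine ENNReal.toReal_mono (measure_ne_top _ _) (measure_mono_ae ?_)
    filter_upwards [hnonneg] with ω hω hlt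
    show sumCapacity _ _ _ < _
    simpa using sumCapacity_lt_mul_of_forall_lt hm0 hγ hω hlt
  · filter_upwards [eventually_gt_atTop 0] with γ hγ
    refine ENNReal.toReal_mono (measure_ne_top _ _) (measure_mono_ae ?_)
    filter_upwards [hnonneg] with ω hω hlt
    exact lt_of_sumCapacity_lt hm0 hγ hω hlt

/-- Diversity gain of the joint optimum power/rate allocation (OPRA, realized by
fractional waterfilling) in coded V-BLAST: with independent Gamma-distributed gains of
shapes `n−m+i`, the outage probability of the waterfilled sum capacity has diversity
gain `m(n−(m−1)/2)` — the same as the optimum rate allocation alone. -/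
theorem opra_diversity_gain
    {Ω : Type*} [MeasurableSpace Ω] (μ : Measure Ω) [IsProbabilityMeasure μ]
    (n m : ℕ) (hm : 1 ≤ m) (hmn : m ≤ n) (R : ℝ) (hR : 0 < R)
    (g : Fin m → Ω → ℝ) (hg : ∀ i, Measurable (g i))
    (hind : iIndepFun g μ)
    (hlaw : ∀ i : Fin m, Measure.map (g i) μ = gammaMeasure (n - m + (i : ℕ) + 1) 1) :
    Tendsto
      (fun γ₀ : ℝ =>
        -Real.log
            ((μ {ω | (⨆ α : {α : Fin m → ℝ // (∀ i, 0 ≤ α i) ∧ ∑ i, α i = m},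
                ∑ i, Real.log (1 + (α : Fin m → ℝ) i * γ₀ * g i ω)) < m * R}).toReal) /
          Real.log γ₀)
      atTop (nhds ((m : ℝ) * ((n : ℝ) - ((m : ℝ) - 1) / 2))) :=
  opra_diversity_gain_general μ n m hm hmn R hR g hind hlaw
end

section
/- Let g be a random variable whose law is the exponential distribution with rate 1 (i.e., Gamma with shape 1 and rate 1). Then lim_{γ₀ → ∞} ( E[ ln(1 + γ₀ g) ] − ln γ₀ ) = −γ_E, where γ_E ≈ 0.577 is the Euler–Mascheroni constant; i.e., the mean per-stream capacity of a stream with exponentially distributed gain satisfies E[ln(1 + γ₀ g)] ≈ ln γ₀ − γ_E at high SNR. -/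
/-!
For `γ ≥ 1` and `g > 0`, `log (1 + γ g) - log γ = log (γ⁻¹ + g)`, which is dominated by
`|log g| + log 2` and tends to `log g`; dominated convergence gives the limit `E[log g]`.
For `g ~ Exp(1)` this is `∫₀^∞ log t e^{-t} dt = Γ'(1) = -γ_E`.
-/

open MeasureTheory ProbabilityTheory Filter Set Real Topology

theorem integral_log_mul_exp_neg :
    ∫ t in Ioi (0 : ℝ), log t * exp (-t) = -eulerMascheroniConstant := by
  have hGammaIntegral : HasDerivAt Complex.GammaIntegral (-eulerMascheroniConstant) 1 :=
    Complex.hasDerivAt_Gamma_one.congr_of_eventuallyEq <|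
      ((isOpen_lt continuous_const Complex.continuous_re).eventually_mem (by simp)).mono
        fun s hs => (Complex.Gamma_eq_integral hs).symm
  have h := (Complex.hasDerivAt_GammaIntegral (s := 1) (by simp)).unique hGammaIntegral
  simp only [sub_self, Complex.cpow_zero, one_mul, ← Complex.ofReal_mul] at h
  exact_mod_cast h

theorem gammaMeasure_one_one_eq_withDensity :
    gammaMeasure 1 1 =
      (volume.restrict (Ioi 0)).withDensity fun x => ENNReal.ofReal (exp (-x)) := by
  rw [gammaMeasure, ← withDensity_indicator measurableSet_Ioi]
  refine withDensity_congr_ae ?_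
  filter_upwards [Measure.ae_ne volume 0] with x hx
  rcases lt_or_gt_of_ne hx with hx | hx
  · simp [gammaPDF_of_neg hx, hx.le]
  · simp [gammaPDF_of_nonneg hx.le, hx]

theorem ae_pos_gammaMeasure_one_one : ∀ᵐ x ∂gammaMeasure 1 1, 0 < x := by
  rw [gammaMeasure_one_one_eq_withDensity]
  exact (withDensity_absolutelyContinuous _ _).ae_le (ae_restrict_mem measurableSet_Ioi)

theorem integral_gammaMeasure_one_one (f : ℝ → ℝ) :
    ∫ x, f x ∂gammaMeasure 1 1 = ∫ x in Ioi 0, f x * exp (-x) := by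
  rw [gammaMeasure_one_one_eq_withDensity, integral_withDensity_eq_integral_toReal_smul
    (by fun_prop) (.of_forall fun _ => ENNReal.ofReal_lt_top)]
  simp only [ENNReal.toReal_ofReal (exp_pos _).le, smul_eq_mul, mul_comm]

theorem integral_log_gammaMeasure_one_one :
    ∫ x, log x ∂gammaMeasure 1 1 = -eulerMascheroniConstant := by
  rw [integral_gammaMeasure_one_one, integral_log_mul_exp_neg]

-- A non-integrable function has Bochner integral `0`, so the nonzero value forces integrability.
theorem integrable_log_gammaMeasure_one_one : Integrable log (gammaMeasure 1 1) :=
  .of_integral_ne_zero <| by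
    rw [integral_log_gammaMeasure_one_one, neg_ne_zero]
    exact (one_half_lt_eulerMascheroniConstant.trans' (by norm_num)).ne'

theorem abs_log_add_le {ε x : ℝ} (hε : 0 ≤ ε) (hε1 : ε ≤ 1) (hx : 0 < x) :
    |log (ε + x)| ≤ |log x| + log 2 := by
  have hlog2 : 0 ≤ log 2 := log_nonneg one_le_two
  have hx_le : x ≤ exp |log x| := (exp_log hx).symm.le.trans (exp_le_exp.2 (le_abs_self _))
  have hone_le : 1 ≤ exp |log x| := one_le_exp (abs_nonneg _)
  rw [abs_le]
  constructor
  · linarith [neg_abs_le (log x), log_le_log hx (by linarith : x ≤ ε + x)]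
  · calc log (ε + x) ≤ log (2 * exp |log x|) := log_le_log (by linarith) (by linarith)
      _ = |log x| + log 2 := by rw [log_mul two_ne_zero (exp_pos _).ne', log_exp, add_comm]

section

variable {Ω : Type*} [MeasurableSpace Ω] {μ : Measure Ω} [IsProbabilityMeasure μ] {g : Ω → ℝ}

theorem integral_log_one_add_mul_sub_log (hpos : ∀ᵐ ω ∂μ, 0 < g ω) {γ : ℝ} (hγ : 0 < γ)
    (hint : Integrable (fun ω => log (γ⁻¹ + g ω)) μ) :
    (∫ ω, log (1 + γ * g ω) ∂μ) - log γ = ∫ ω, log (γ⁻¹ + g ω) ∂μ := by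
  have hsplit : (fun ω => log (1 + γ * g ω)) =ᵐ[μ] fun ω => log γ + log (γ⁻¹ + g ω) := by
    filter_upwards [hpos] with ω hω
    rw [← log_mul hγ.ne' (by positivity), mul_add, mul_inv_cancel₀ hγ.ne']
  rw [integral_congr_ae hsplit, integral_add (integrable_const _) hint]
  simp

theorem tendsto_integral_log_one_add_mul_sub_log (hg : AEMeasurable g μ)
    (hpos : ∀ᵐ ω ∂μ, 0 < g ω) (hlog : Integrable (fun ω => log (g ω)) μ) :
    Tendsto (fun γ : ℝ => (∫ ω, log (1 + γ * g ω) ∂μ) - log γ) atTop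
      (𝓝 (∫ ω, log (g ω) ∂μ)) := by
  have hmeas (γ : ℝ) : AEStronglyMeasurable (fun ω => log (γ⁻¹ + g ω)) μ :=
    (measurable_log.comp_aemeasurable (hg.const_add _)).aestronglyMeasurable
  have hdom : ∀ᶠ γ in atTop, ∀ᵐ ω ∂μ, ‖log (γ⁻¹ + g ω)‖ ≤ |log (g ω)| + log 2 := by
    filter_upwards [eventually_ge_atTop 1] with γ hγ
    filter_upwards [hpos] with ω hω
    exact abs_log_add_le (inv_nonneg.2 (zero_le_one.trans hγ)) (inv_le_one_of_one_le₀ hγ) hω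
  have hbound : Integrable (fun ω => |log (g ω)| + log 2) μ := hlog.abs.add (integrable_const _)
  have hlim : Tendsto (fun γ : ℝ => ∫ ω, log (γ⁻¹ + g ω) ∂μ) atTop (𝓝 (∫ ω, log (g ω) ∂μ)) := by
    refine tendsto_integral_filter_of_dominated_convergence _ (.of_forall hmeas) hdom hbound ?_
    filter_upwards [hpos] with ω hω
    have hshift : Tendsto (fun γ : ℝ => γ⁻¹ + g ω) atTop (𝓝 (g ω)) := by
      simpa using tendsto_inv_atTop_zero.add_const (g ω)
    exact (continuousAt_log hω.ne').tendsto.comp hshift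
  refine hlim.congr' ?_
  filter_upwards [eventually_ge_atTop 1, hdom] with γ hγ hγdom
  exact (integral_log_one_add_mul_sub_log hpos (zero_lt_one.trans_le hγ)
    (hbound.mono' (hmeas γ) hγdom)).symm

end

/-- High-SNR expansion of the mean per-stream capacity with an exponentially
distributed gain (Gamma with shape 1 and rate 1):
`E[ln(1 + γ₀ g)] − ln γ₀ → −γ_E` as `γ₀ → ∞`, where `γ_E` is the Euler–Mascheroni
constant. -/
theorem mean_capacity_high_snr
    {Ω : Type*} [MeasurableSpace Ω] (μ : Measure Ω) [IsProbabilityMeasure μ]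
    (g : Ω → ℝ) (hg : Measurable g)
    (hlaw : Measure.map g μ = gammaMeasure 1 1) :
    Tendsto (fun γ₀ : ℝ => (∫ ω, Real.log (1 + γ₀ * g ω) ∂μ) - Real.log γ₀)
      atTop (nhds (-Real.eulerMascheroniConstant)) := by
  have hpos : ∀ᵐ ω ∂μ, 0 < g ω :=
    ae_of_ae_map hg.aemeasurable (hlaw ▸ ae_pos_gammaMeasure_one_one)
  have hlog : Integrable (fun ω => log (g ω)) μ :=
    (integrable_map_measure measurable_log.aestronglyMeasurable hg.aemeasurable).1
      (hlaw ▸ integrable_log_gammaMeasure_one_one)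
  have hmean : ∫ ω, log (g ω) ∂μ = -eulerMascheroniConstant := by
    rw [← integral_map hg.aemeasurable measurable_log.aestronglyMeasurable, hlaw,
      integral_log_gammaMeasure_one_one]
  simpa only [hmean] using tendsto_integral_log_one_add_mul_sub_log hg.aemeasurable hpos hlog
end
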